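/- arXiv:1809.02818 — 11 statements merged into one kernel-verified Lean document; each statement's English description precedes it below -/
import Mathlib

section
/- Let $K$ be a field and let $E$ be a field extension of $K$ that is finitely generated as a $K$-algebra. Then $E$ is a finite (algebraic) field extension of $K$ (Zariski's Lemma). -/
theorem zariski_lemma
    {K E : Type*} [Field K] [Field E] [Algebra K E]
    (hfg : Algebra.FiniteType K E) :
    Module.Finite K E := by
  exact finite_of_finite_type_of_isJacobsonRing K E
end

section
/- Let $K$ be a field, $L$ an algebraically closed field extension of $K$, and $\mathfrak{a} \subseteq K[X_1,\ldots,X_n]$ an ideal. Then the vanishing ideal of the zero set, $I_K(V_L(\mathfrak{a})) = \{ f \in K[X_1,\ldots,X_n] \mid f(a) = 0 \text{ for all } a \in L^n \text{ with } g(a)=0 \;\forall g \in \mathfrak{a} \}$, equals the radical $\sqrt{\mathfrak{a}}$ (strong Nullstellensatz). -/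
open MvPolynomial

theorem strong_nullstellensatz
    {K L : Type*} [Field K] [Field L] [Algebra K L] [IsAlgClosed L] {n : ℕ}
    (𝔞 : Ideal (MvPolynomial (Fin n) K)) (f : MvPolynomial (Fin n) K) :
    (∀ a : Fin n → L, (∀ g ∈ 𝔞, aeval a g = 0) → aeval a f = 0) ↔
      f ∈ 𝔞.radical := by
  constructor
  · intro h
    rw [𝔞.radical_eq_jacobson, Ideal.jacobson]
    refine Ideal.mem_sInf.mpr ?_
    rintro m ⟨hle, hmax⟩
    haveI : m.IsMaximal := hmax
    letI : Field (MvPolynomial (Fin n) K ⧸ m) := Ideal.Quotient.field m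
    haveI : NoZeroSMulDivisors K (MvPolynomial (Fin n) K ⧸ m) :=
      inferInstance
    have hint := MvPolynomial.quotient_mk_comp_C_isIntegral_of_isJacobsonRing m
    haveI : Algebra.IsIntegral K (MvPolynomial (Fin n) K ⧸ m) :=
      ⟨fun x => hint x⟩
    haveI : Algebra.IsAlgebraic K (MvPolynomial (Fin n) K ⧸ m) :=
      Algebra.IsIntegral.isAlgebraic
    let φ : (MvPolynomial (Fin n) K ⧸ m) →ₐ[K] L := IsAlgClosed.lift
    let ψ := φ.comp (Ideal.Quotient.mkₐ K m)
    let a : Fin n → L := fun i => ψ (X i)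
    have key : ∀ p : MvPolynomial (Fin n) K, aeval a p = ψ p := fun p => by
      conv_rhs => rw [MvPolynomial.aeval_unique ψ]
      rfl
    have h0 := h a (fun g hg => by
      rw [key]
      show φ (Ideal.Quotient.mk m g) = 0
      rw [Ideal.Quotient.eq_zero_iff_mem.mpr (hle hg), map_zero])
    rw [key] at h0
    have hf0 : Ideal.Quotient.mk m f = 0 := by
      apply φ.injective
      rw [map_zero]
      exact h0
    exact Ideal.Quotient.eq_zero_iff_mem.mp hf0
  · rintro ⟨r, hr⟩ a ha
    have := ha _ hr
    rw [map_pow] at this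
    exact (pow_eq_zero_iff'.mp this).1
end

section
/- Let $K$ be an algebraically closed field and $\mathfrak{a}$ a proper ideal of $K[X_1,\ldots,X_n]$. Then the following are equivalent: (i) the zero set $V_K(\mathfrak{a}) \subseteq K^n$ is finite; (ii) $K[X_1,\ldots,X_n]/\mathfrak{a}$ is a finite-dimensional $K$-vector space; (iii) for each $i = 1,\ldots,n$, the ideal $\mathfrak{a}$ contains a nonzero polynomial $f_i(X_i)$ depending only on the variable $X_i$. -/
open MvPolynomial

/-- (iii) → (ii): if each variable satisfies a nonzero univariate polynomial in `𝔞`,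
the quotient is finite dimensional. -/
lemma aux_iii_to_ii {K : Type*} [Field K] {n : ℕ}
    (𝔞 : Ideal (MvPolynomial (Fin n) K)) (h𝔞 : 𝔞 ≠ ⊤)
    (h : ∀ i : Fin n, ∃ p : Polynomial K, p ≠ 0 ∧
      Polynomial.aeval (X i : MvPolynomial (Fin n) K) p ∈ 𝔞) :
    FiniteDimensional K (MvPolynomial (Fin n) K ⧸ 𝔞) := by
  haveI : Nontrivial (MvPolynomial (Fin n) K ⧸ 𝔞) := Ideal.Quotient.nontrivial_iff.mpr h𝔞
  set mk := Ideal.Quotient.mkₐ K 𝔞 with hmk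
  have hint : ∀ i : Fin n, IsIntegral K (mk (X i)) := by
    intro i
    obtain ⟨p, hp0, hp⟩ := h i
    refine ⟨p * Polynomial.C p.leadingCoeff⁻¹,
      Polynomial.monic_mul_leadingCoeff_inv hp0, ?_⟩
    rw [← Polynomial.aeval_def, Polynomial.aeval_algHom_apply]
    have : Polynomial.aeval (X i : MvPolynomial (Fin n) K)
        (p * Polynomial.C p.leadingCoeff⁻¹) ∈ 𝔞 := by
      rw [map_mul]; exact Ideal.mul_mem_right _ _ hp
    exact Ideal.Quotient.eq_zero_iff_mem.mpr this
  have hfin :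
      (Algebra.adjoin K (Set.range fun i : Fin n => mk (X i))).toSubmodule.FG :=
    fg_adjoin_of_finite (Set.finite_range _) (by rintro x ⟨i, rfl⟩; exact hint i)
  have htop : Algebra.adjoin K (Set.range fun i : Fin n => mk (X i)) = ⊤ := by
    have : (Set.range fun i : Fin n => mk (X i)) = mk '' Set.range X := by
      rw [← Set.range_comp]; rfl
    rw [this, ← AlgHom.map_adjoin, adjoin_range_X, Algebra.map_top,
      (AlgHom.range_eq_top _).mpr (Ideal.Quotient.mkₐ_surjective K 𝔞)]
  rw [htop] at hfin
  exact ⟨by rwa [Algebra.top_toSubmodule] at hfin⟩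

/-- (ii) → (iii). -/
lemma aux_ii_to_iii {K : Type*} [Field K] {n : ℕ}
    (𝔞 : Ideal (MvPolynomial (Fin n) K)) (h𝔞 : 𝔞 ≠ ⊤)
    (h : FiniteDimensional K (MvPolynomial (Fin n) K ⧸ 𝔞)) :
    ∀ i : Fin n, ∃ p : Polynomial K, p ≠ 0 ∧
      Polynomial.aeval (X i : MvPolynomial (Fin n) K) p ∈ 𝔞 := by
  haveI : Nontrivial (MvPolynomial (Fin n) K ⧸ 𝔞) := Ideal.Quotient.nontrivial_iff.mpr h𝔞
  intro i
  obtain ⟨p, hpm, hp⟩ := IsIntegral.of_finite K (Ideal.Quotient.mkₐ K 𝔞 (X i))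
  refine ⟨p, hpm.ne_zero, ?_⟩
  rw [← Polynomial.aeval_def, Polynomial.aeval_algHom_apply] at hp
  simpa [Ideal.Quotient.mkₐ_eq_mk, Ideal.Quotient.eq_zero_iff_mem] using hp

/-- (iii) → (i). -/
lemma aux_iii_to_i {K : Type*} [Field K] {n : ℕ}
    (𝔞 : Ideal (MvPolynomial (Fin n) K))
    (h : ∀ i : Fin n, ∃ p : Polynomial K, p ≠ 0 ∧
      Polynomial.aeval (X i : MvPolynomial (Fin n) K) p ∈ 𝔞) :
    ({a : Fin n → K | ∀ f ∈ 𝔞, eval a f = 0}.Finite) := by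
  choose p hp0 hp using h
  refine Set.Finite.subset (Set.Finite.pi fun i => Polynomial.finite_setOf_isRoot (hp0 i)) ?_
  intro a ha
  rw [Set.mem_pi]
  intro i _
  have := ha _ (hp i)
  have key : eval a (Polynomial.aeval (X i : MvPolynomial (Fin n) K) (p i))
      = Polynomial.eval (a i) (p i) := by
    have h1 := Polynomial.aeval_algHom_apply (MvPolynomial.aeval a) (X i) (p i)
    simp only [MvPolynomial.aeval_X] at h1
    exact h1.symm
  simpa [Polynomial.IsRoot, ← key] using this

/-- (i) → (iii), via the Nullstellensatz. -/
lemma aux_i_to_iii {K : Type*} [Field K] [IsAlgClosed K] {n : ℕ}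
    (𝔞 : Ideal (MvPolynomial (Fin n) K))
    (h : ({a : Fin n → K | ∀ f ∈ 𝔞, eval a f = 0}.Finite)) :
    ∀ i : Fin n, ∃ p : Polynomial K, p ≠ 0 ∧
      Polynomial.aeval (X i : MvPolynomial (Fin n) K) p ∈ 𝔞 := by
  intro i
  have hZ : zeroLocus K 𝔞 = {a : Fin n → K | ∀ f ∈ 𝔞, eval a f = 0} := rfl
  set q : Polynomial K := ∏ a ∈ h.toFinset, (Polynomial.X - Polynomial.C (a i)) with hq
  have hqm : q.Monic := Polynomial.monic_prod_of_monic _ _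
    fun a _ => Polynomial.monic_X_sub_C _
  have hmem : Polynomial.aeval (X i : MvPolynomial (Fin n) K) q ∈ 𝔞.radical := by
    rw [← vanishingIdeal_zeroLocus_eq_radical (K := K), mem_vanishingIdeal_iff]
    intro x hx
    have key : eval x (Polynomial.aeval (X i : MvPolynomial (Fin n) K) q)
        = Polynomial.eval (x i) q := by
      have h1 := Polynomial.aeval_algHom_apply (MvPolynomial.aeval x) (X i) q
      simp only [MvPolynomial.aeval_X] at h1
      exact h1.symm
    change eval x _ = 0
    rw [key, hq, Polynomial.eval_prod]
    refine Finset.prod_eq_zero (h.mem_toFinset.mpr (hZ ▸ hx)) ?_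
    simp
  obtain ⟨m, hm⟩ := hmem
  exact ⟨q ^ m, pow_ne_zero m hqm.ne_zero, by rwa [map_pow]⟩

theorem finiteness_theorem
    {K : Type*} [Field K] [IsAlgClosed K] {n : ℕ}
    (𝔞 : Ideal (MvPolynomial (Fin n) K)) (h𝔞 : 𝔞 ≠ ⊤) :
    ({a : Fin n → K | ∀ f ∈ 𝔞, eval a f = 0}.Finite ↔
        FiniteDimensional K (MvPolynomial (Fin n) K ⧸ 𝔞)) ∧
    (FiniteDimensional K (MvPolynomial (Fin n) K ⧸ 𝔞) ↔
        ∀ i : Fin n, ∃ p : Polynomial K, p ≠ 0 ∧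
          Polynomial.aeval (X i : MvPolynomial (Fin n) K) p ∈ 𝔞) := by
  refine ⟨⟨fun h => aux_iii_to_ii 𝔞 h𝔞 (aux_i_to_iii 𝔞 h),
      fun h => aux_iii_to_i 𝔞 (aux_ii_to_iii 𝔞 h𝔞 h)⟩,
    ⟨aux_ii_to_iii 𝔞 h𝔞, aux_iii_to_ii 𝔞 h𝔞⟩⟩
end

section
/- Let $K$ be an algebraically closed field, $\mathfrak{a} \subseteq K[X_1,\ldots,X_n]$ a radical ideal with finite zero set $V_K(\mathfrak{a})$, and write $A = K[X_1,\ldots,X_n]/\mathfrak{a}$ with images $x_1,\ldots,x_n$. Then a point $(b_1,\ldots,b_n) \in K^n$ belongs to $V_K(\mathfrak{a})$ if and only if there exists a nonzero $g \in A$ that is a simultaneous eigenvector of the multiplication operators $\lambda_{x_i}: A \to A$ with eigenvalues $b_i$, i.e., $x_i \cdot g = b_i \cdot g$ in $A$ for all $i = 1,\ldots,n$ (Stickelberger's theorem). -/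
open MvPolynomial

set_option maxHeartbeats 1000000

theorem stickelberger
    {K : Type*} [Field K] [IsAlgClosed K] {n : ℕ}
    (𝔞 : Ideal (MvPolynomial (Fin n) K)) (hrad : 𝔞.IsRadical)
    (hfin : {a : Fin n → K | ∀ f ∈ 𝔞, eval a f = 0}.Finite)
    (b : Fin n → K) :
    (∀ f ∈ 𝔞, eval b f = 0) ↔
      ∃ g : MvPolynomial (Fin n) K ⧸ 𝔞, g ≠ 0 ∧
        ∀ i : Fin n,
          Ideal.Quotient.mk 𝔞 (X i) * g =
            algebraMap K (MvPolynomial (Fin n) K ⧸ 𝔞) (b i) * g := by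
  classical
  have hset : {a : Fin n → K | ∀ f ∈ 𝔞, eval a f = 0} = zeroLocus K 𝔞 := rfl
  constructor
  · intro hb
    -- construct a polynomial h with eval b h = 1 and eval a h = 0 for other zeros a
    have key : ∀ a : Fin n → K, ∃ p : MvPolynomial (Fin n) K,
        eval b p = 1 ∧ (a ≠ b → eval a p = 0) := by
      intro a
      by_cases hab : a = b
      · exact ⟨1, by simp, fun h => absurd hab h⟩
      · obtain ⟨i, hi⟩ := Function.ne_iff.mp hab
        refine ⟨C ((b i - a i)⁻¹) * (X i - C (a i)), ?_, fun _ => by simp⟩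
        have : b i - a i ≠ 0 := sub_ne_zero.mpr (Ne.symm hi)
        simp [inv_mul_cancel₀ this]
    choose p hp1 hp2 using key
    set S := hfin.toFinset.erase b with hS
    set h : MvPolynomial (Fin n) K := ∏ a ∈ S, p a with hh
    have hevalb : eval b h = 1 := by
      rw [hh, map_prod]
      exact Finset.prod_eq_one fun a _ => hp1 a
    have hevala : ∀ x ∈ zeroLocus K 𝔞, x ≠ b → eval x h = 0 := by
      intro x hx hxb
      have hxS : x ∈ S := by
        rw [hS, Finset.mem_erase, Set.Finite.mem_toFinset]
        exact ⟨hxb, hx⟩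
      rw [hh, map_prod]
      exact Finset.prod_eq_zero hxS (hp2 x hxb)
    have hmem : ∀ i : Fin n, (X i - C (b i)) * h ∈ 𝔞 := by
      intro i
      have hv : (X i - C (b i)) * h ∈ vanishingIdeal K (zeroLocus K 𝔞) := by
        rw [mem_vanishingIdeal_iff]
        intro x hx
        by_cases hxb : x = b
        · subst hxb; simp
        · change eval x ((X i - C (b i)) * h) = 0
          rw [map_mul, hevala x hx hxb, mul_zero]
      rwa [vanishingIdeal_zeroLocus_eq_radical, hrad.radical] at hv
    refine ⟨Ideal.Quotient.mk 𝔞 h, ?_, ?_⟩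
    · intro hg0
      have hm : h ∈ 𝔞 := (Ideal.Quotient.eq_zero_iff_mem).mp hg0
      have := hb h hm
      rw [hevalb] at this
      exact one_ne_zero this
    · intro i
      have hz : Ideal.Quotient.mk 𝔞 ((X i - C (b i)) * h) = 0 :=
        (Ideal.Quotient.eq_zero_iff_mem).mpr (hmem i)
      have h2 : algebraMap K (MvPolynomial (Fin n) K ⧸ 𝔞) (b i)
          = Ideal.Quotient.mk 𝔞 (C (b i)) := rfl
      rw [map_mul, map_sub, sub_mul, sub_eq_zero] at hz
      rw [hz, h2]
  · rintro ⟨g, hg0, hgi⟩ f hf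
    have main : ∀ q : MvPolynomial (Fin n) K,
        Ideal.Quotient.mk 𝔞 q * g
          = algebraMap K (MvPolynomial (Fin n) K ⧸ 𝔞) (eval b q) * g := by
      intro q
      induction q using MvPolynomial.induction_on with
      | C a => rw [eval_C]; rfl
      | add q r hq hr => simp only [map_add, add_mul, hq, hr]
      | mul_X q i hq =>
        rw [map_mul, map_mul, eval_X, map_mul, mul_assoc, hgi i,
          mul_left_comm, hq, mul_left_comm, mul_assoc]
    have h0 : algebraMap K (MvPolynomial (Fin n) K ⧸ 𝔞) (eval b f) * g = 0 := by
      have hz : Ideal.Quotient.mk 𝔞 f = 0 := (Ideal.Quotient.eq_zero_iff_mem).mpr hf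
      have hm := main f
      rw [hz, zero_mul] at hm
      exact hm.symm
    by_contra hne
    apply hg0
    calc g = algebraMap K (MvPolynomial (Fin n) K ⧸ 𝔞) (eval b f)⁻¹ *
          (algebraMap K (MvPolynomial (Fin n) K ⧸ 𝔞) (eval b f) * g) := by
          rw [← mul_assoc, ← map_mul, inv_mul_cancel₀ hne, map_one, one_mul]
      _ = 0 := by rw [h0, mul_zero]
end

section
/- Let $\varphi(X) \in \mathbb{R}[X]$ be a non-constant polynomial with positive leading coefficient, and let $A = \mathbb{R}[X,Y]/\langle Y^2 + \varphi(X) \rangle$. Then the unit group of $A$ equals $\mathbb{R}^\times$, i.e., the only invertible elements of $A$ are the nonzero constants. -/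
section Frozen
open MvPolynomial

noncomputable def ySqPlusPhiIdeal (φ : Polynomial ℝ) : Ideal (MvPolynomial (Fin 2) ℝ) :=
  Ideal.span {(X 1 : MvPolynomial (Fin 2) ℝ) ^ 2 + Polynomial.aeval (X 0) φ}

end Frozen

section Poly
open Polynomial

lemma coeff_sq_nonneg (a : ℝ[X]) {n : ℕ} (h : (a^2).natDegree ≤ n) : 0 ≤ (a^2).coeff n := by
  rcases h.lt_or_eq with h | h
  · rw [coeff_eq_zero_of_natDegree_lt h]
  · rw [← h, coeff_natDegree, leadingCoeff_pow]
    exact sq_nonneg _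

lemma not_unit_norm (φ : ℝ[X]) (hφ : 0 < φ.natDegree) (hlead : 0 < φ.leadingCoeff)
    (a b : ℝ[X]) (hb : b ≠ 0) : ¬ IsUnit (a^2 + φ*b^2) := by
  have hφ0 : φ ≠ 0 := fun h => by simp [h] at hφ
  have hb2 : b^2 ≠ 0 := pow_ne_zero _ hb
  have hdm : (φ * b^2).natDegree = φ.natDegree + 2 * b.natDegree := by
    rw [natDegree_mul hφ0 hb2, natDegree_pow]
  set N := max (2 * a.natDegree) (φ.natDegree + 2 * b.natDegree) with hN
  have hN1 : 1 ≤ N := le_max_of_le_right (by omega)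
  have key : 0 < (a^2 + φ*b^2).coeff N := by
    rw [coeff_add]
    rcases le_or_gt (2 * a.natDegree) (φ.natDegree + 2 * b.natDegree) with h | h
    · have hNe : N = (φ * b^2).natDegree := by rw [hdm]; omega
      have h1 : 0 ≤ (a^2).coeff N := coeff_sq_nonneg a (by rw [natDegree_pow]; omega)
      have h2 : 0 < (φ * b^2).coeff N := by
        rw [hNe, coeff_natDegree, leadingCoeff_mul, leadingCoeff_pow]
        exact mul_pos hlead (pow_two_pos_of_ne_zero (leadingCoeff_ne_zero.mpr hb))
      linarith
    · have ha : a ≠ 0 := by rintro rfl; simp at h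
      have hNe : N = (a^2).natDegree := by rw [natDegree_pow]; omega
      have h2 : (φ * b^2).coeff N = 0 := coeff_eq_zero_of_natDegree_lt (by omega)
      have h1 : 0 < (a^2).coeff N := by
        rw [hNe, coeff_natDegree, leadingCoeff_pow]
        exact pow_two_pos_of_ne_zero (leadingCoeff_ne_zero.mpr ha)
      linarith
  intro hu
  obtain ⟨r, _, hr⟩ := Polynomial.isUnit_iff.mp hu
  rw [← hr, coeff_C, if_neg (by omega)] at key
  exact lt_irrefl _ key

end Poly

section Equiv2
open MvPolynomial

noncomputable def e2 : MvPolynomial (Fin 2) ℝ ≃ₐ[ℝ] Polynomial (Polynomial ℝ) :=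
  (MvPolynomial.renameEquiv ℝ (Equiv.swap 0 1)).trans
    ((MvPolynomial.finSuccEquiv ℝ 1).trans
      (Polynomial.mapAlgEquiv ((MvPolynomial.finSuccEquiv ℝ 0).trans
        (Polynomial.mapAlgEquiv (MvPolynomial.isEmptyAlgEquiv ℝ (Fin 0))))))

lemma e2_X1 : e2 (X 1) = Polynomial.X := by
  simp only [e2, AlgEquiv.trans_apply, MvPolynomial.renameEquiv_apply, MvPolynomial.rename_X]
  rw [show (Equiv.swap (0 : Fin 2) 1) 1 = 0 from Equiv.swap_apply_right 0 1]
  rw [MvPolynomial.finSuccEquiv_X_zero]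
  simp

lemma e2_X0 : e2 (X 0) = Polynomial.C Polynomial.X := by
  simp only [e2, AlgEquiv.trans_apply, MvPolynomial.renameEquiv_apply, MvPolynomial.rename_X]
  rw [show (Equiv.swap (0 : Fin 2) 1) 0 = 1 from Equiv.swap_apply_left 0 1]
  rw [show (1 : Fin 2) = Fin.succ 0 from rfl, MvPolynomial.finSuccEquiv_X_succ]
  simp [MvPolynomial.finSuccEquiv_X_zero]

lemma e2_C (c : ℝ) : e2 (MvPolynomial.C c) = Polynomial.C (Polynomial.C c) := by
  have := e2.commutes c
  rw [MvPolynomial.algebraMap_eq] at this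
  rw [this]
  rfl

end Equiv2

section Quot
open Polynomial

variable (φ : ℝ[X])

noncomputable def fpoly : (ℝ[X])[X] := X ^ 2 + C φ

noncomputable def Jid : Ideal ((ℝ[X])[X]) := Ideal.span {fpoly φ}

lemma fpoly_monic : (fpoly φ).Monic :=
  monic_X_pow_add (lt_of_le_of_lt (degree_C_le) (by norm_num))

lemma fpoly_degree : (fpoly φ).degree = 2 := by
  rw [fpoly, degree_add_eq_left_of_degree_lt (by
    rw [degree_X_pow]; exact lt_of_le_of_lt degree_C_le (by norm_num)), degree_X_pow]
  rfl

lemma mk_eq_of_lt (s t : (ℝ[X])[X]) (hs : s.degree < 2) (ht : t.degree < 2)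
    (h : Ideal.Quotient.mk (Jid φ) s = Ideal.Quotient.mk (Jid φ) t) : s = t := by
  rw [Ideal.Quotient.eq, Jid, Ideal.mem_span_singleton] at h
  have := Polynomial.eq_zero_of_dvd_of_degree_lt h
    (by rw [fpoly_degree]; exact lt_of_le_of_lt (degree_sub_le _ _) (max_lt hs ht))
  exact sub_eq_zero.mp this

lemma mk_mod (p : (ℝ[X])[X]) :
    Ideal.Quotient.mk (Jid φ) p = Ideal.Quotient.mk (Jid φ) (p %ₘ fpoly φ) := by
  rw [Ideal.Quotient.eq, Jid, Ideal.mem_span_singleton,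
    modByMonic_eq_sub_mul_div p (fpoly φ)]
  ring_nf
  exact Dvd.intro _ rfl

noncomputable def tau : (ℝ[X])[X] →ₐ[ℝ[X]] (ℝ[X])[X] := Polynomial.aeval (-X)

lemma tau_f : tau (fpoly φ) = fpoly φ := by
  simp only [tau, map_add, map_pow, aeval_X, aeval_C, fpoly, Polynomial.algebraMap_eq, neg_pow, even_two.neg_pow]
  ring

noncomputable def sigma : ((ℝ[X])[X] ⧸ Jid φ) →+* ((ℝ[X])[X] ⧸ Jid φ) :=
  Ideal.Quotient.lift (Jid φ) ((Ideal.Quotient.mk (Jid φ)).comp (tau).toRingHom)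
    (by
      intro t ht
      rw [Jid, Ideal.mem_span_singleton] at ht
      obtain ⟨r, rfl⟩ := ht
      simp only [RingHom.comp_apply, AlgHom.toRingHom_eq_coe, RingHom.coe_coe, map_mul, tau_f]
      rw [← map_mul, Ideal.Quotient.eq_zero_iff_mem, Jid, Ideal.mem_span_singleton]
      exact Dvd.intro _ rfl)

lemma sigma_mk (p : (ℝ[X])[X]) :
    sigma φ (Ideal.Quotient.mk (Jid φ) p) = Ideal.Quotient.mk (Jid φ) (tau p) :=
  Ideal.Quotient.lift_mk _ _ _

lemma norm_identity (a b : ℝ[X]) :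
    (C b * X + C a) * (tau (C b * X + C a)) =
      C (a^2 + φ * b^2) - C (b^2) * fpoly φ := by
  simp only [tau, map_add, map_mul, aeval_X, aeval_C, fpoly, Polynomial.algebraMap_eq,
    map_pow]
  ring

lemma deg_le_one_of_lt_two {p : (ℝ[X])[X]} (h : p.degree < 2) : p.degree ≤ 1 := by
  rw [show (2:WithBot ℕ) = ((2:ℕ):WithBot ℕ) from rfl, degree_lt_iff_coeff_zero] at h
  rw [show (1:WithBot ℕ) = ((1:ℕ):WithBot ℕ) from rfl, degree_le_iff_coeff_zero]
  intro m hm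
  exact h m (by exact_mod_cast Nat.succ_le_of_lt (by exact_mod_cast hm))

end Quot

section QuotUnit
open Polynomial

lemma quot_unit (φ : ℝ[X]) (hφ : 0 < φ.natDegree) (hlead : 0 < φ.leadingCoeff)
    (v : (ℝ[X])[X] ⧸ Jid φ) (hv : IsUnit v) :
    ∃ c : ℝ, c ≠ 0 ∧ v = Ideal.Quotient.mk (Jid φ) (C (C c)) := by
  obtain ⟨p, rfl⟩ := Ideal.Quotient.mk_surjective v
  set g := p %ₘ fpoly φ with hgdef
  have hgd : g.degree < 2 := by
    have := degree_modByMonic_lt p (fpoly_monic φ)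
    rwa [fpoly_degree] at this
  set a := g.coeff 0 with ha
  set b := g.coeff 1 with hbdef
  have hgrep : g = C b * X + C a := eq_X_add_C_of_degree_le_one (deg_le_one_of_lt_two hgd)
  have hmk : Ideal.Quotient.mk (Jid φ) p = Ideal.Quotient.mk (Jid φ) (C b * X + C a) := by
    rw [mk_mod φ p, ← hgdef, ← hgrep]
  have hprod : Ideal.Quotient.mk (Jid φ) p * sigma φ (Ideal.Quotient.mk (Jid φ) p)
      = Ideal.Quotient.mk (Jid φ) (C (a^2 + φ*b^2)) := by
    rw [hmk, sigma_mk, ← map_mul, norm_identity]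
    rw [map_sub]
    have hz : Ideal.Quotient.mk (Jid φ) (C (b^2) * fpoly φ) = 0 := by
      rw [Ideal.Quotient.eq_zero_iff_mem, Jid, Ideal.mem_span_singleton]
      exact dvd_mul_left _ _
    rw [hz, sub_zero]
  have hNu : IsUnit (Ideal.Quotient.mk (Jid φ) (C (a^2 + φ*b^2))) := by
    rw [← hprod]; exact hv.mul (hv.map _)
  obtain ⟨w, hw⟩ := hNu.exists_right_inv
  obtain ⟨q, rfl⟩ := Ideal.Quotient.mk_surjective w
  set q' := q %ₘ fpoly φ with hq'def
  have hq'd : q'.degree ≤ 1 := deg_le_one_of_lt_two (by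
    have := degree_modByMonic_lt q (fpoly_monic φ)
    rwa [fpoly_degree] at this)
  have h1 : Ideal.Quotient.mk (Jid φ) (C (a^2 + φ*b^2) * q')
      = Ideal.Quotient.mk (Jid φ) 1 := by
    rw [map_mul, ← mk_mod, map_one]
    exact hw
  have heq : C (a^2 + φ*b^2) * q' = 1 := by
    apply mk_eq_of_lt φ _ _ ?_ ?_ h1
    · exact lt_of_le_of_lt (le_trans (degree_mul_le _ _) (add_le_add degree_C_le hq'd))
        (by norm_num)
    · rw [degree_one]; norm_num
  have hNunit : IsUnit (a^2 + φ*b^2) := by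
    apply IsUnit.of_mul_eq_one (q'.coeff 0)
    have h0 := congrArg (fun r => Polynomial.coeff r 0) heq
    simp only [Polynomial.coeff_C_mul, Polynomial.coeff_one_zero] at h0
    exact h0
  have hb : b = 0 := by
    by_contra hb
    exact not_unit_norm φ hφ hlead a b hb hNunit
  have hau : IsUnit a := by
    apply isUnit_of_dvd_unit (dvd_pow_self a two_ne_zero)
    rw [hb] at hNunit
    simpa using hNunit
  obtain ⟨c, hcu, hca⟩ := Polynomial.isUnit_iff.mp hau
  refine ⟨c, hcu.ne_zero, ?_⟩
  rw [hmk, hb, ← hca]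
  simp
end QuotUnit

section Gen
open Polynomial
lemma e2_gen (φ : Polynomial ℝ) :
    e2 ((MvPolynomial.X 1 : MvPolynomial (Fin 2) ℝ) ^ 2
      + Polynomial.aeval (MvPolynomial.X 0) φ) = fpoly φ := by
  rw [map_add, map_pow, e2_X1, fpoly]
  congr 1
  rw [show e2 (Polynomial.aeval (MvPolynomial.X 0) φ) = Polynomial.aeval (e2 (MvPolynomial.X 0)) φ from
    (Polynomial.aeval_algHom_apply e2.toAlgHom (MvPolynomial.X 0) φ).symm, e2_X0]
  rw [show (Polynomial.C Polynomial.X : Polynomial (Polynomial ℝ)) =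
    (Polynomial.CAlgHom : Polynomial ℝ →ₐ[ℝ] Polynomial (Polynomial ℝ)) Polynomial.X from rfl,
    Polynomial.aeval_algHom_apply, Polynomial.aeval_X_left_apply]
  rfl


end Gen

open MvPolynomial

theorem units_of_quotient_by_Y_sq_add_phi
    (φ : Polynomial ℝ) (hφ : 0 < φ.natDegree) (hlead : 0 < φ.leadingCoeff)
    (u : MvPolynomial (Fin 2) ℝ ⧸ ySqPlusPhiIdeal φ) :
    IsUnit u ↔ ∃ c : ℝ, c ≠ 0 ∧ u = Ideal.Quotient.mk (ySqPlusPhiIdeal φ) (MvPolynomial.C c) := by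
  have hmap : Jid φ = Ideal.map (e2 : MvPolynomial (Fin 2) ℝ ≃ₐ[ℝ] Polynomial (Polynomial ℝ))
      (ySqPlusPhiIdeal φ) := by
    rw [ySqPlusPhiIdeal, Ideal.map_span, Set.image_singleton, e2_gen, Jid]
  set Q := Ideal.quotientEquivAlg (ySqPlusPhiIdeal φ) (Jid φ) e2 hmap with hQ
  have hQmk : ∀ x, Q (Ideal.Quotient.mk (ySqPlusPhiIdeal φ) x)
      = Ideal.Quotient.mk (Jid φ) (e2 x) := fun x => rfl
  constructor
  · intro hu
    obtain ⟨c, hc, hQc⟩ := quot_unit φ hφ hlead (Q u) (hu.map Q)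
    refine ⟨c, hc, ?_⟩
    apply Q.injective
    rw [hQc, hQmk, e2_C]
  · rintro ⟨c, hc, rfl⟩
    exact ((isUnit_iff_ne_zero.mpr hc).map (MvPolynomial.C : ℝ →+* MvPolynomial (Fin 2) ℝ)).map
      (Ideal.Quotient.mk (ySqPlusPhiIdeal φ))
end

section
/- Let $A$ be a finitely generated algebra over a field $K$ which is an integral domain. If $A$ is a Euclidean domain, then there exists a maximal ideal $\mathfrak{m}$ of $A$ such that the natural map $A^\times \to (A/\mathfrak{m})^\times$ is surjective. In particular, if moreover $A^\times = K^\times$, then $A$ has a maximal ideal $\mathfrak{m}$ with $A/\mathfrak{m} \cong K$. -/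
theorem euclidean_affine_domain_has_maximal_ideal_with_surjective_units
    {K A : Type*} [Field K] [CommRing A] [IsDomain A] [Algebra K A]
    (hfg : Algebra.FiniteType K A)
    (heucl : ∃ δ : A → ℕ, ∀ a b : A, b ≠ 0 →
        ∃ q r : A, a = q * b + r ∧ (r = 0 ∨ δ r < δ b)) :
    (∃ 𝔪 : Ideal A, 𝔪.IsMaximal ∧
        ∀ y : (A ⧸ 𝔪)ˣ, ∃ x : Aˣ, Ideal.Quotient.mk 𝔪 (x : A) = (y : A ⧸ 𝔪)) ∧
    ((∀ a : A, IsUnit a ↔ ∃ c : K, c ≠ 0 ∧ a = algebraMap K A c) →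
        ∃ 𝔪 : Ideal A, 𝔪.IsMaximal ∧ Nonempty ((A ⧸ 𝔪) ≃ₐ[K] K)) := by
  classical
  obtain ⟨δ, hδ⟩ := heucl
  have main : ∃ 𝔪 : Ideal A, 𝔪.IsMaximal ∧
      ∀ y : (A ⧸ 𝔪)ˣ, ∃ x : Aˣ, Ideal.Quotient.mk 𝔪 (x : A) = (y : A ⧸ 𝔪) := by
    by_cases hF : ∀ a : A, a ≠ 0 → IsUnit a
    · have hfield : IsField A :=
        ⟨exists_pair_ne A, mul_comm, fun {a} ha => (hF a ha).exists_right_inv⟩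
      letI := hfield.toField
      haveI : Nontrivial (A ⧸ (⊥ : Ideal A)) :=
        Ideal.Quotient.nontrivial_iff.mpr Ideal.bot_isMaximal.ne_top
      refine ⟨⊥, Ideal.bot_isMaximal, fun y => ?_⟩
      obtain ⟨a, ha⟩ := Ideal.Quotient.mk_surjective (y : A ⧸ (⊥ : Ideal A))
      have ha0 : a ≠ 0 := by
        rintro rfl
        exact y.ne_zero (by simpa using ha.symm)
      obtain ⟨u, rfl⟩ := hF a ha0
      exact ⟨u, ha⟩
    · push_neg at hF
      obtain ⟨b0, hb00, hb0u⟩ := hF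
      have hS : ∃ n, ∃ b : A, b ≠ 0 ∧ ¬IsUnit b ∧ δ b = n := ⟨δ b0, b0, hb00, hb0u, rfl⟩
      obtain ⟨b, hb0, hbu, hbδ⟩ := Nat.find_spec hS
      have hbmin : ∀ c : A, c ≠ 0 → ¬IsUnit c → δ b ≤ δ c := by
        intro c hc0 hcu
        rw [hbδ]
        exact Nat.find_le ⟨c, hc0, hcu, rfl⟩
      set 𝔪 := Ideal.span {b} with h𝔪
      have key : ∀ a : A, Ideal.Quotient.mk 𝔪 a ≠ 0 →
          ∃ u : Aˣ, Ideal.Quotient.mk 𝔪 (u : A) = Ideal.Quotient.mk 𝔪 a := by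
        intro a ha
        obtain ⟨q, r, hqr, hr⟩ := hδ a b hb0
        have hrm : Ideal.Quotient.mk 𝔪 r = Ideal.Quotient.mk 𝔪 a := by
          rw [Ideal.Quotient.eq, hqr]
          simpa [h𝔪, Ideal.mem_span_singleton] using
            (Ideal.mem_span_singleton.2 ⟨-q, by ring⟩ :
              r - (q * b + r) ∈ Ideal.span {b})
        have hr0 : r ≠ 0 := by
          rintro rfl
          exact ha (hrm ▸ map_zero _)
        have hru : IsUnit r := by
          by_contra hru
          rcases hr with h | h
          · exact hr0 h
          · exact absurd h (not_lt.2 (hbmin r hr0 hru))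
        obtain ⟨u, rfl⟩ := hru
        exact ⟨u, hrm⟩
      have hne : 𝔪 ≠ ⊤ := by
        rw [h𝔪, Ne, Ideal.span_singleton_eq_top]
        exact hbu
      haveI : Nontrivial (A ⧸ 𝔪) := Ideal.Quotient.nontrivial_iff.mpr hne
      have hqf : IsField (A ⧸ 𝔪) := by
        refine ⟨exists_pair_ne _, mul_comm, fun {x} hx => ?_⟩
        obtain ⟨a, rfl⟩ := Ideal.Quotient.mk_surjective x
        obtain ⟨u, hu⟩ := key a hx
        refine ⟨Ideal.Quotient.mk 𝔪 ((u⁻¹ : Aˣ) : A), ?_⟩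
        rw [← hu, ← map_mul]
        simp
      have hmax : 𝔪.IsMaximal := Ideal.Quotient.maximal_of_isField 𝔪 hqf
      refine ⟨𝔪, hmax, fun y => ?_⟩
      letI := hqf.toField
      obtain ⟨a, ha⟩ := Ideal.Quotient.mk_surjective (y : A ⧸ 𝔪)
      have h0 : Ideal.Quotient.mk 𝔪 a ≠ 0 := by
        rw [ha]; exact y.ne_zero
      obtain ⟨u, hu⟩ := key a h0
      exact ⟨u, hu.trans ha⟩
  refine ⟨main, fun hunit => ?_⟩
  obtain ⟨𝔪, hmax, hsurj⟩ := main
  haveI := hmax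
  letI : Field (A ⧸ 𝔪) := Ideal.Quotient.field 𝔪
  have hsurj' : Function.Surjective (algebraMap K (A ⧸ 𝔪)) := by
    intro x
    by_cases hx : x = 0
    · exact ⟨0, by simp [hx]⟩
    · obtain ⟨u, hu⟩ := hsurj (Units.mk0 x hx)
      obtain ⟨c, hc0, hc⟩ := (hunit (u : A)).1 u.isUnit
      refine ⟨c, ?_⟩
      rw [IsScalarTower.algebraMap_apply K A (A ⧸ 𝔪), ← hc]
      simpa using hu
  have hinj : Function.Injective (algebraMap K (A ⧸ 𝔪)) :=
    (algebraMap K (A ⧸ 𝔪)).injective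
  exact ⟨𝔪, hmax,
    ⟨(AlgEquiv.ofBijective (Algebra.ofId K (A ⧸ 𝔪)) ⟨hinj, hsurj'⟩).symm⟩⟩
end

section
/- A commutative ring $A$ is real (i.e., $a_1^2 + \cdots + a_n^2 = 0$ implies $a_1 = \cdots = a_n = 0$ for all $a_i \in A$) if and only if the intersection of all real prime ideals of $A$ is zero. -/
open Finset

namespace RealRingAux

variable {A : Type*} [CommRing A]


variable {A : Type*} [CommRing A]

lemma isSumSq_sq (x : A) : IsSumSq (x ^ 2) := by
  simpa [sq] using IsSumSq.sq_add x 0 IsSumSq.zero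

lemma IsSumSq.mul_self_mul (x : A) {s : A} (hs : IsSumSq s) : IsSumSq (x * x * s) := by
  induction hs with
  | zero => simpa using IsSumSq.zero
  | @sq_add a S pS ih =>
      have h : x * x * (a * a + S) = (x * a) * (x * a) + x * x * S := by ring
      rw [h]; exact IsSumSq.sq_add _ ih

lemma IsSumSq.mul' {s t : A} (hs : IsSumSq s) (ht : IsSumSq t) : IsSumSq (s * t) := by
  induction hs with
  | zero => simpa using IsSumSq.zero
  | @sq_add a S pS ih =>
      have h : (a * a + S) * t = a * a * t + S * t := by ring
      rw [h]; exact (IsSumSq.mul_self_mul a ht).add ih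

lemma isSumSq_natCast (n : ℕ) : IsSumSq (n : A) := by
  induction n with
  | zero => simpa using IsSumSq.zero
  | succ n ih =>
      have h : ((n + 1 : ℕ) : A) = 1 * 1 + (n : A) := by push_cast; ring
      rw [h]; exact IsSumSq.sq_add _ ih

lemma isSumSq_finsetSum {ι : Type*} (s : Finset ι) (f : ι → A) (h : ∀ i ∈ s, IsSumSq (f i)) :
    IsSumSq (∑ i ∈ s, f i) :=
  Finset.sum_induction f IsSumSq (fun _ _ => IsSumSq.add) IsSumSq.zero h

lemma IsSumSq.pow' {t : A} (ht : IsSumSq t) (n : ℕ) : IsSumSq (t ^ (n + 1)) := by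
  induction n with
  | zero => simpa using ht
  | succ e ih => rw [pow_succ]; exact IsSumSq.mul' ih ht

/-- An ideal is real if sums of squares in it have all members in it. -/
def IsRealIdeal (I : Ideal A) : Prop :=
  ∀ (n : ℕ) (a : Fin n → A), ∑ i, a i ^ 2 ∈ I → ∀ i, a i ∈ I

lemma IsRealIdeal.mem_of_isSumSq {I : Ideal A} (hI : IsRealIdeal I) {s : A} (hs : IsSumSq s) :
    ∀ (n : ℕ) (a : Fin n → A), (∑ i, a i ^ 2) + s ∈ I → ∀ i, a i ∈ I := by
  induction hs with
  | zero =>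
      intro n a h
      exact hI n a (by simpa using h)
  | @sq_add b S pS ih =>
      intro n a h i
      have key : (∑ j, (Fin.snoc a b : Fin (n + 1) → A) j ^ 2) + S
          = (∑ j, a j ^ 2) + (b * b + S) := by
        rw [Fin.sum_univ_castSucc]
        simp [Fin.snoc_castSucc, Fin.snoc_last, sq]
        ring
      have h' : (∑ j, (Fin.snoc a b : Fin (n + 1) → A) j ^ 2) + S ∈ I := by
        rw [key]; exact h
      have := ih (n + 1) (Fin.snoc a b) h' (Fin.castSucc i)
      simpa using this

lemma IsRealIdeal.mem_of_sq {I : Ideal A} (hI : IsRealIdeal I) {s x : A} (hs : IsSumSq s)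
    (h : x ^ 2 + s ∈ I) : x ∈ I := by
  have := hI.mem_of_isSumSq hs 1 (fun _ => x) (by simpa using h) 0
  exact this

lemma IsRealIdeal.mem_of_pow {I : Ideal A} (hI : IsRealIdeal I) {x : A} :
    ∀ n : ℕ, x ^ n ∈ I → x ∈ I := by
  intro n
  induction n using Nat.strong_induction_on with
  | _ n ih =>
      intro h
      rcases Nat.lt_or_ge n 2 with h2 | h2
      · interval_cases n
        · have hI1 : I = ⊤ := (Ideal.eq_top_iff_one I).mpr (by simpa using h)
          rw [hI1]; exact Submodule.mem_top
        · simpa using h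
      · set m := (n + 1) / 2 with hm
        have hmn : m < n := by omega
        have h2m : n ≤ 2 * m := by omega
        have hpow : x ^ (2 * m) ∈ I := by
          have : x ^ (2 * m) = x ^ n * x ^ (2 * m - n) := by
            rw [← pow_add]; congr 1; omega
          rw [this]; exact I.mul_mem_right _ h
        have hsq : (x ^ m) ^ 2 + 0 ∈ I := by
          rw [add_zero, ← pow_mul]
          have : m * 2 = 2 * m := by ring
          rw [this]; exact hpow
        exact ih m hmn (hI.mem_of_sq IsSumSq.zero hsq)


lemma key_identity (x y : A) (M : ℕ) :
    ∃ S₁ S₂ : A, IsSumSq S₁ ∧ IsSumSq S₂ ∧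
      (x + y) ^ (4 * M) + (x - y) ^ (4 * M) = x ^ (2 * M) * S₁ + y ^ (2 * M) * S₂ := by
  set f : ℕ → A := fun k =>
    x ^ k * y ^ (4 * M - k) * ((1 + (-1 : A) ^ (4 * M - k)) * ((4 * M).choose k : A)) with hf
  have hexp : (x + y) ^ (4 * M) + (x - y) ^ (4 * M) = ∑ k ∈ range (4 * M + 1), f k := by
    rw [sub_eq_add_neg, add_pow, add_pow, ← Finset.sum_add_distrib]
    refine Finset.sum_congr rfl fun k hk => ?_
    rw [hf]
    have : (-y) ^ (4 * M - k) = (-1 : A) ^ (4 * M - k) * y ^ (4 * M - k) := by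
      rw [neg_pow]
    rw [this]; ring
  -- per-term SOS for large k
  have term1 : ∀ k ∈ (range (4 * M + 1)).filter (fun k => 2 * M ≤ k),
      IsSumSq (x ^ (k - 2 * M) * y ^ (4 * M - k) * ((1 + (-1 : A) ^ (4 * M - k)) * ((4 * M).choose k : A))) := by
    intro k hk
    rw [Finset.mem_filter, Finset.mem_range] at hk
    obtain ⟨hk4, hk2⟩ := hk
    rcases Nat.even_or_odd k with he | ho
    · -- k even
      obtain ⟨e, he'⟩ := he
      obtain ⟨c, hc⟩ : ∃ c, k - 2 * M = c + c := ⟨e - M, by omega⟩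
      obtain ⟨d, hd⟩ : ∃ d, 4 * M - k = d + d := ⟨2 * M - e, by omega⟩
      have hneg : (-1 : A) ^ (4 * M - k) = 1 := Even.neg_one_pow ⟨d, hd⟩
      have hxk : x ^ (k - 2 * M) = x ^ c * x ^ c := by rw [hc, pow_add]
      have hyk : y ^ (4 * M - k) = y ^ d * y ^ d := by rw [hd, pow_add]
      have : x ^ (k - 2 * M) * y ^ (4 * M - k) * ((1 + (-1 : A) ^ (4 * M - k)) * ((4 * M).choose k : A))
          = (x ^ c * y ^ d) * (x ^ c * y ^ d) * ((2 * (4 * M).choose k : ℕ) : A) := by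
        rw [hneg, hxk, hyk]
        push_cast
        ring
      rw [this]
      exact IsSumSq.mul_self_mul _ (isSumSq_natCast _)
    · -- k odd
      have hodd : Odd (4 * M - k) := Nat.Even.sub_odd (by omega) ⟨2 * M, by ring⟩ ho
      have hneg : (1 + (-1 : A) ^ (4 * M - k)) = 0 := by rw [Odd.neg_one_pow hodd]; ring
      rw [hneg]
      simpa using IsSumSq.zero
  have term2 : ∀ k ∈ (range (4 * M + 1)).filter (fun k => ¬ 2 * M ≤ k),
      IsSumSq (x ^ k * y ^ (2 * M - k) * ((1 + (-1 : A) ^ (4 * M - k)) * ((4 * M).choose k : A))) := by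
    intro k hk
    rw [Finset.mem_filter, Finset.mem_range] at hk
    obtain ⟨hk4, hk2⟩ := hk
    push_neg at hk2
    rcases Nat.even_or_odd k with he | ho
    · obtain ⟨c, hc⟩ := he
      obtain ⟨d, hd⟩ : ∃ d, 2 * M - k = d + d := ⟨M - c, by omega⟩
      have e4 : Even (4 * M - k) := ⟨2 * M - c, by omega⟩
      have hneg : (-1 : A) ^ (4 * M - k) = 1 := Even.neg_one_pow e4
      have hxk : x ^ k = x ^ c * x ^ c := by rw [hc, pow_add]
      have hyk : y ^ (2 * M - k) = y ^ d * y ^ d := by rw [hd, pow_add]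
      have : x ^ k * y ^ (2 * M - k) * ((1 + (-1 : A) ^ (4 * M - k)) * ((4 * M).choose k : A))
          = (x ^ c * y ^ d) * (x ^ c * y ^ d) * ((2 * (4 * M).choose k : ℕ) : A) := by
        rw [hneg, hxk, hyk]
        push_cast
        ring
      rw [this]
      exact IsSumSq.mul_self_mul _ (isSumSq_natCast _)
    · have hodd : Odd (4 * M - k) := Nat.Even.sub_odd (by omega) ⟨2 * M, by ring⟩ ho
      have hneg : (1 + (-1 : A) ^ (4 * M - k)) = 0 := by rw [Odd.neg_one_pow hodd]; ring
      rw [hneg]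
      simpa using IsSumSq.zero
  refine ⟨∑ k ∈ (range (4 * M + 1)).filter (fun k => 2 * M ≤ k),
      x ^ (k - 2 * M) * y ^ (4 * M - k) * ((1 + (-1 : A) ^ (4 * M - k)) * ((4 * M).choose k : A)),
    ∑ k ∈ (range (4 * M + 1)).filter (fun k => ¬ 2 * M ≤ k),
      x ^ k * y ^ (2 * M - k) * ((1 + (-1 : A) ^ (4 * M - k)) * ((4 * M).choose k : A)),
    isSumSq_finsetSum _ _ term1, isSumSq_finsetSum _ _ term2, ?_⟩
  rw [hexp, ← Finset.sum_filter_add_sum_filter_not (range (4 * M + 1)) (fun k => 2 * M ≤ k) f,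
    Finset.mul_sum, Finset.mul_sum]
  congr 1
  · refine Finset.sum_congr rfl fun k hk => ?_
    rw [Finset.mem_filter, Finset.mem_range] at hk
    have hx : x ^ k = x ^ (2 * M) * x ^ (k - 2 * M) := by
      rw [← pow_add]; congr 1; omega
    rw [hf]; dsimp only; rw [hx]; ring
  · refine Finset.sum_congr rfl fun k hk => ?_
    rw [Finset.mem_filter, Finset.mem_range] at hk
    have hy : y ^ (4 * M - k) = y ^ (2 * M) * y ^ (2 * M - k) := by
      rw [← pow_add]; congr 1; omega
    rw [hf]; dsimp only; rw [hy]; ring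


lemma raise {I : Ideal A} {x s : A} {m M : ℕ} (hs : IsSumSq s) (h : x ^ (2 * m) + s ∈ I)
    (hmM : m ≤ M) : ∃ t : A, IsSumSq t ∧ x ^ (2 * M) + t ∈ I := by
  refine ⟨x ^ (2 * (M - m)) * s, ?_, ?_⟩
  · have : x ^ (2 * (M - m)) * s = x ^ (M - m) * x ^ (M - m) * s := by
      rw [two_mul, pow_add]
    rw [this]; exact IsSumSq.mul_self_mul _ hs
  · have heq : x ^ (2 * M) + x ^ (2 * (M - m)) * s
        = x ^ (2 * (M - m)) * (x ^ (2 * m) + s) := by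
      rw [mul_add, ← pow_add]
      congr 2
      omega
    rw [heq]; exact I.mul_mem_left _ h

/-- The real radical of an ideal. -/
def realRadical (I : Ideal A) : Ideal A where
  carrier := {x | ∃ (m : ℕ) (s : A), IsSumSq s ∧ x ^ (2 * m) + s ∈ I}
  zero_mem' := ⟨1, 0, IsSumSq.zero, by simp⟩
  add_mem' := by
    rintro x y ⟨m, s, hs, h⟩ ⟨k, t, ht, h'⟩
    obtain ⟨s', hs', hx⟩ := raise hs h (Nat.le_add_right m k)
    obtain ⟨t', ht', hy⟩ := raise ht h' (Nat.le_add_left k m)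
    set M := m + k
    obtain ⟨S₁, S₂, hS₁, hS₂, hid⟩ := key_identity x y M
    refine ⟨2 * M, (x - y) ^ (4 * M) + (s' * S₁ + t' * S₂), ?_, ?_⟩
    · have hsq : (x - y) ^ (4 * M) = ((x - y) ^ (2 * M)) ^ 2 := by
        rw [← pow_mul]; congr 1; ring
      exact (hsq ▸ isSumSq_sq _).add ((IsSumSq.mul' hs' hS₁).add (IsSumSq.mul' ht' hS₂))
    · have heq : (x + y) ^ (2 * (2 * M)) + ((x - y) ^ (4 * M) + (s' * S₁ + t' * S₂))
          = (x ^ (2 * M) + s') * S₁ + (y ^ (2 * M) + t') * S₂ := by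
        have h4 : 2 * (2 * M) = 4 * M := by ring
        rw [h4]
        linear_combination hid
      rw [heq]
      exact Ideal.add_mem _ (I.mul_mem_right _ hx) (I.mul_mem_right _ hy)
  smul_mem' := by
    rintro r x ⟨m, s, hs, h⟩
    refine ⟨m, r ^ (2 * m) * s, ?_, ?_⟩
    · have : r ^ (2 * m) * s = r ^ m * r ^ m * s := by rw [two_mul, pow_add]
      rw [this]; exact IsSumSq.mul_self_mul _ hs
    · have heq : (r • x) ^ (2 * m) + r ^ (2 * m) * s = r ^ (2 * m) * (x ^ (2 * m) + s) := by
        rw [smul_eq_mul, mul_pow]; ring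
      rw [heq]; exact I.mul_mem_left _ h

lemma le_realRadical (I : Ideal A) : I ≤ realRadical I := by
  intro x hx
  exact ⟨1, 0, IsSumSq.zero, by simpa [pow_succ, pow_zero] using I.mul_mem_left x hx⟩

lemma mem_realRadical_of_mem_sup_left {I J : Ideal A} {x : A} (hx : x ∈ I) :
    x ∈ realRadical (I ⊔ J) := le_realRadical _ (Ideal.mem_sup_left hx)

lemma isRealIdeal_realRadical (I : Ideal A) : IsRealIdeal (realRadical I) := by
  intro n a ha i
  obtain ⟨m, s, hs, h⟩ := ha
  set t : A := ∑ j ∈ Finset.univ.erase i, a j ^ 2 with hT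
  have hts : IsSumSq t := isSumSq_finsetSum _ _ (fun j _ => isSumSq_sq (a j))
  have hsum : ∑ j, a j ^ 2 = a i ^ 2 + t := (Finset.add_sum_erase _ _ (Finset.mem_univ i)).symm
  set S' : A := ∑ j ∈ range (2 * m), (a i ^ 2) ^ j * t ^ (2 * m - j) * ((2 * m).choose j : A)
    with hS'
  have hS's : IsSumSq S' := by
    refine isSumSq_finsetSum _ _ fun j hj => ?_
    rw [Finset.mem_range] at hj
    obtain ⟨e, he⟩ : ∃ e, 2 * m - j = e + 1 := ⟨2 * m - j - 1, by omega⟩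
    have : (a i ^ 2) ^ j * t ^ (2 * m - j) * ((2 * m).choose j : A)
        = (a i ^ j) * (a i ^ j) * (t ^ (2 * m - j) * ((2 * m).choose j : A)) := by
      rw [← pow_mul]
      ring
    rw [this]
    have hp : IsSumSq (t ^ (2 * m - j)) := by rw [he]; exact IsSumSq.pow' hts e
    exact IsSumSq.mul_self_mul _ (IsSumSq.mul' hp (isSumSq_natCast _))
  refine ⟨2 * m, S' + s, hS's.add hs, ?_⟩
  have heq : a i ^ (2 * (2 * m)) + (S' + s) = (∑ j, a j ^ 2) ^ (2 * m) + s := by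
    rw [hsum, add_pow, Finset.sum_range_succ, Nat.choose_self, Nat.sub_self, pow_zero, hS']
    push_cast
    rw [← pow_mul]
    ring
  rw [heq]; exact h


lemma mem_realRadical_iff {I : Ideal A} {x : A} :
    x ∈ realRadical I ↔ ∃ (m : ℕ) (s : A), IsSumSq s ∧ x ^ (2 * m) + s ∈ I := Iff.rfl

lemma field_lemma {K : Type*} [Field K]
    (hK : ∀ (n : ℕ) (a : Fin n → K), ∑ i, a i ^ 2 ≠ -1)
    {n : ℕ} (a : Fin n → K) (h : ∑ i, a i ^ 2 = 0) : ∀ i, a i = 0 := by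
  intro i
  by_contra hi
  set g : Fin n → K := fun j => a j * (a i)⁻¹ with hg
  have hgsum : ∑ j, g j ^ 2 = 0 := by
    simp only [hg, mul_pow, ← Finset.sum_mul, h, zero_mul]
  have hgi : g i ^ 2 = 1 := by
    simp [hg, mul_inv_cancel₀ hi]
  have h2 : g i ^ 2 + ∑ j ∈ Finset.univ.erase i, g j ^ 2 = 0 := by
    rw [Finset.add_sum_erase _ (fun j => g j ^ 2) (Finset.mem_univ i)]; exact hgsum
  have h3 : ∑ j ∈ Finset.univ.erase i, g j ^ 2 = -1 := by
    rw [hgi] at h2; linear_combination h2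
  apply hK n (fun j => if j = i then 0 else g j)
  have h4 : ∀ j : Fin n, (if j = i then 0 else g j) ^ 2 = (if j = i then 0 else g j ^ 2) := by
    intro j; split <;> simp
  calc ∑ j, (if j = i then 0 else g j) ^ 2
      = ∑ j, (if j = i then 0 else g j ^ 2) := Finset.sum_congr rfl fun j _ => h4 j
    _ = (if i = i then 0 else g i ^ 2) + ∑ j ∈ Finset.univ.erase i,
          (if j = i then 0 else g j ^ 2) := (Finset.add_sum_erase _ _ (Finset.mem_univ i)).symm
    _ = ∑ j ∈ Finset.univ.erase i, g j ^ 2 := by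
        rw [if_pos rfl, zero_add]
        exact Finset.sum_congr rfl fun j hj => if_neg (Finset.mem_erase.mp hj).1
    _ = -1 := h3

lemma frac_lemma {B : Type*} [CommRing B] [IsDomain B]
    (hB : ∀ (n : ℕ) (a : Fin n → B), ∑ i, a i ^ 2 = 0 → ∀ i, a i = 0) :
    ∀ (n : ℕ) (a : Fin n → FractionRing B), ∑ i, a i ^ 2 ≠ -1 := by
  intro n a hsum
  obtain ⟨d, hd⟩ := IsLocalization.exist_integer_multiples (nonZeroDivisors B) Finset.univ a
  choose c hc using fun i : Fin n => hd i (Finset.mem_univ i)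
  have hinj : Function.Injective (algebraMap B (FractionRing B)) :=
    IsFractionRing.injective B (FractionRing B)
  have key : (∑ i, c i ^ 2) + (d : B) ^ 2 = 0 := by
    apply hinj
    rw [map_zero, map_add, map_sum, map_pow]
    have hterm : ∀ i : Fin n, algebraMap B (FractionRing B) (c i ^ 2)
        = algebraMap B (FractionRing B) (d : B) ^ 2 * a i ^ 2 := by
      intro i
      rw [map_pow, hc i, Algebra.smul_def, mul_pow]
    rw [Finset.sum_congr rfl fun i _ => hterm i, ← Finset.mul_sum, hsum]
    ring
  have hall := hB (n + 1) (Fin.snoc c (d : B)) ?_ (Fin.last n)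
  · rw [Fin.snoc_last] at hall
    exact nonZeroDivisors.ne_zero d.2 hall
  · rw [Fin.sum_univ_castSucc]
    simpa [Fin.snoc_castSucc, Fin.snoc_last] using key

lemma quot_real {p : Ideal A} (hp : IsRealIdeal p) :
    ∀ (n : ℕ) (b : Fin n → A ⧸ p), ∑ i, b i ^ 2 = 0 → ∀ i, b i = 0 := by
  intro n b hb i
  choose f hf using fun i : Fin n => Ideal.Quotient.mk_surjective (b i)
  have hmem : ∑ i, f i ^ 2 ∈ p := by
    rw [← Ideal.Quotient.eq_zero_iff_mem, map_sum]
    calc ∑ i, Ideal.Quotient.mk p (f i ^ 2) = ∑ i, b i ^ 2 := by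
          exact Finset.sum_congr rfl fun j _ => by rw [map_pow, hf j]
      _ = 0 := hb
  rw [← hf i, Ideal.Quotient.eq_zero_iff_mem]
  exact hp n f hmem i


end RealRingAux

open RealRingAux

def Ideal.IsRealPrime {A : Type*} [CommRing A] (p : Ideal A) : Prop :=
  ∃ hp : p.IsPrime,
    letI := hp
    ∀ (n : ℕ) (a : Fin n → FractionRing (A ⧸ p)), ∑ i, a i ^ 2 ≠ -1

theorem real_ring_iff_inter_real_primes_eq_bot
    {A : Type*} [CommRing A] :
    (∀ (n : ℕ) (a : Fin n → A), ∑ i, a i ^ 2 = 0 → ∀ i, a i = 0) ↔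
      (⨅ p ∈ {p : Ideal A | p.IsRealPrime}, p) = ⊥ := by
  constructor
  · intro H
    rw [eq_bot_iff]
    intro x hx
    have hx' : ∀ p : Ideal A, p.IsRealPrime → x ∈ p := by
      simpa [Submodule.mem_iInf, Set.mem_setOf_eq] using hx
    by_contra hx0
    have hxne : x ≠ 0 := by simpa [Ideal.mem_bot] using hx0
    have hbot : IsRealIdeal (⊥ : Ideal A) := by
      intro n a ha i
      rw [Ideal.mem_bot]
      exact H n a (by simpa [Ideal.mem_bot] using ha) i
    obtain ⟨p, -, hmax⟩ := zorn_le_nonempty₀ {J : Ideal A | IsRealIdeal J ∧ x ∉ J}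
      (fun c hcS hchain y hy => by
        haveI : Nonempty c := ⟨⟨y, hy⟩⟩
        refine ⟨sSup c, ⟨?_, ?_⟩, fun z hz => le_sSup hz⟩
        · intro n a ha i
          obtain ⟨q, hq⟩ :=
            (Submodule.mem_iSup_of_directed _ hchain.directed).mp (sSup_eq_iSup' c ▸ ha)
          exact le_sSup q.2 ((hcS q.2).1 n a hq i)
        · intro hxs
          obtain ⟨q, hq⟩ :=
            (Submodule.mem_iSup_of_directed _ hchain.directed).mp (sSup_eq_iSup' c ▸ hxs)
          exact (hcS q.2).2 hq)
      ⊥ ⟨hbot, by simpa [Ideal.mem_bot] using hxne⟩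
    obtain ⟨⟨hpreal, hxp⟩, hpmax⟩ := hmax
    have hprime : p.IsPrime := by
      constructor
      · intro htop
        rw [htop] at hxp
        exact hxp Submodule.mem_top
      · intro a b hab
        by_contra hcon
        push_neg at hcon
        obtain ⟨ha, hb⟩ := hcon
        have key : ∀ y : A, y ∉ p → x ∈ realRadical (p ⊔ Ideal.span {y}) := by
          intro y hy
          by_contra hxr
          have hle : p ≤ realRadical (p ⊔ Ideal.span {y}) :=
            fun z hz => mem_realRadical_of_mem_sup_left hz
          have := hpmax ⟨isRealIdeal_realRadical _, hxr⟩ hle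
          exact hy (this (le_realRadical _ (Ideal.mem_sup_right (Ideal.subset_span rfl))))
        obtain ⟨m, s, hs, hms⟩ := mem_realRadical_iff.mp (key a ha)
        obtain ⟨k, t, ht, hkt⟩ := mem_realRadical_iff.mp (key b hb)
        have hprod : (x ^ (2 * m) + s) * (x ^ (2 * k) + t) ∈ p := by
          refine Ideal.mul_le.mpr ?_ (Ideal.mul_mem_mul hms hkt)
          intro r hr w hw
          obtain ⟨u, hu, v, hv, rfl⟩ := Submodule.mem_sup.mp hr
          obtain ⟨u', hu', v', hv', rfl⟩ := Submodule.mem_sup.mp hw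
          obtain ⟨ca, hca⟩ := Ideal.mem_span_singleton'.mp hv
          obtain ⟨cb, hcb⟩ := Ideal.mem_span_singleton'.mp hv'
          rw [← hca, ← hcb]
          have hexp : (u + ca * a) * (u' + cb * b)
              = u * (u' + cb * b) + (ca * a) * u' + (ca * cb) * (a * b) := by ring
          rw [hexp]
          exact Ideal.add_mem _
            (Ideal.add_mem _ (p.mul_mem_right _ hu) (p.mul_mem_left _ hu'))
            (p.mul_mem_left _ hab)
        have hexp2 : x ^ (2 * (m + k)) + (x ^ m * x ^ m * t + (x ^ k * x ^ k * s + s * t)) ∈ p := by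
          have heq : x ^ (2 * (m + k)) + (x ^ m * x ^ m * t + (x ^ k * x ^ k * s + s * t))
              = (x ^ (2 * m) + s) * (x ^ (2 * k) + t) := by ring
          rw [heq]; exact hprod
        have hsos : IsSumSq (x ^ m * x ^ m * t + (x ^ k * x ^ k * s + s * t)) :=
          (IsSumSq.mul_self_mul _ ht).add
            ((IsSumSq.mul_self_mul _ hs).add (IsSumSq.mul' hs ht))
        have hpow : (x ^ (m + k)) ^ 2 = x ^ (2 * (m + k)) := by
          rw [← pow_mul]; congr 1; ring
        have hxmk : x ^ (m + k) ∈ p := hpreal.mem_of_sq hsos (by rw [hpow]; exact hexp2)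
        exact hxp (hpreal.mem_of_pow (m + k) hxmk)
    haveI := hprime
    have hfr : ∀ (n : ℕ) (a : Fin n → FractionRing (A ⧸ p)), ∑ i, a i ^ 2 ≠ -1 :=
      frac_lemma (quot_real hpreal)
    exact hxp (hx' p ⟨hprime, hfr⟩)
  · intro h n a hsum i
    have hmem : a i ∈ (⊥ : Ideal A) := by
      rw [← h]
      simp only [Submodule.mem_iInf, Set.mem_setOf_eq]
      intro p hp
      obtain ⟨hpr, hfrac⟩ := hp
      haveI := hpr
      set φ : A →+* FractionRing (A ⧸ p) :=
        (algebraMap (A ⧸ p) (FractionRing (A ⧸ p))).comp (Ideal.Quotient.mk p) with hφdef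
      have hφ : ∑ j, φ (a j) ^ 2 = 0 := by
        have : ∑ j, φ (a j) ^ 2 = φ (∑ j, a j ^ 2) := by
          rw [map_sum]
          exact Finset.sum_congr rfl fun j _ => (map_pow φ _ 2).symm
        rw [this, hsum, map_zero]
      have hzero := field_lemma hfrac (fun j => φ (a j)) hφ i
      have hmk : Ideal.Quotient.mk p (a i) = 0 := by
        apply IsFractionRing.injective (A ⧸ p) (FractionRing (A ⧸ p))
        simpa [hφdef] using hzero
      exact Ideal.Quotient.eq_zero_iff_mem.mp hmk
    simpa [Ideal.mem_bot] using hmem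
end

section
/- Let $A$ be a commutative ring and $S \subseteq A$ a multiplicatively closed subset with $1 \in S$, $0 \notin S$, and $S + \sum A^2 \subseteq S$ (where $\sum A^2$ is the set of sums of squares). If $\mathfrak{p}$ is an ideal maximal among ideals disjoint from $S$, then $\mathfrak{p}$ is a prime ideal and the fraction field of $A/\mathfrak{p}$ is formally real. -/
theorem prime_maximal_disjoint_from_square_stable_set
    {A : Type*} [CommRing A] (S : Set A)
    (hmul : ∀ s ∈ S, ∀ t ∈ S, s * t ∈ S) (h1 : (1 : A) ∈ S) (h0 : (0 : A) ∉ S)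
    (hsq : ∀ s ∈ S, ∀ (n : ℕ) (a : Fin n → A), s + ∑ i, a i ^ 2 ∈ S)
    (𝔭 : Ideal A) (hdisj : ∀ s ∈ S, s ∉ 𝔭)
    (hmax : ∀ q : Ideal A, 𝔭 < q → ∃ s ∈ S, s ∈ q) :
    ∃ hp : 𝔭.IsPrime,
      letI := hp
      ∀ (n : ℕ) (a : Fin n → FractionRing (A ⧸ 𝔭)), ∑ i, a i ^ 2 ≠ -1 := by
  have key : ∀ c : A, c ∉ 𝔭 → ∃ s ∈ S, ∃ a, s - a * c ∈ 𝔭 := by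
    intro c hc
    have hlt : 𝔭 < 𝔭 ⊔ Ideal.span {c} := by
      refine lt_of_le_of_ne le_sup_left fun h => hc ?_
      rw [h]
      exact Ideal.mem_sup_right (Ideal.subset_span rfl)
    obtain ⟨s, hs, hsmem⟩ := hmax _ hlt
    obtain ⟨p, hp, z, hz, rfl⟩ := Submodule.mem_sup.mp hsmem
    obtain ⟨a, rfl⟩ := Ideal.mem_span_singleton'.mp hz
    exact ⟨p + a * c, hs, a, by simpa using hp⟩
  have hp : 𝔭.IsPrime := by
    constructor
    · intro h
      exact hdisj 1 h1 (h ▸ Submodule.mem_top)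
    · intro x y hxy
      by_contra hor
      push_neg at hor
      obtain ⟨hx, hy⟩ := hor
      obtain ⟨s, hs, a, hsa⟩ := key x hx
      obtain ⟨t, ht, b, htb⟩ := key y hy
      refine hdisj (s * t) (hmul s hs t ht) ?_
      have : s * t = (s - a * x) * t + (a * x) * (t - b * y) + (a * b) * (x * y) := by ring
      rw [this]
      exact add_mem (add_mem (Ideal.mul_mem_right _ _ hsa) (Ideal.mul_mem_left _ _ htb))
        (Ideal.mul_mem_left _ _ hxy)
  refine ⟨hp, ?_⟩
  intro n a heq
  obtain ⟨b, hb⟩ := IsLocalization.exist_integer_multiples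
    (nonZeroDivisors (A ⧸ 𝔭)) Finset.univ a
  choose x hx using fun i : Fin n => hb i (Finset.mem_univ i)
  have hbne : (b : A ⧸ 𝔭) ≠ 0 := nonZeroDivisors.coe_ne_zero b
  have hmap : algebraMap (A ⧸ 𝔭) (FractionRing (A ⧸ 𝔭)) (∑ i, x i ^ 2 + (b : A ⧸ 𝔭) ^ 2) = 0 := by
    rw [map_add, map_sum, map_pow]
    have h1' : ∀ i, algebraMap (A ⧸ 𝔭) (FractionRing (A ⧸ 𝔭)) (x i ^ 2)
        = algebraMap (A ⧸ 𝔭) (FractionRing (A ⧸ 𝔭)) (b : A ⧸ 𝔭) ^ 2 * a i ^ 2 := by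
      intro i
      rw [map_pow, hx i, Algebra.smul_def, mul_pow]
    simp_rw [h1']
    rw [← Finset.mul_sum, heq]
    ring
  have hker : ∑ i, x i ^ 2 + (b : A ⧸ 𝔭) ^ 2 = 0 := by
    have := IsFractionRing.injective (A ⧸ 𝔭) (FractionRing (A ⧸ 𝔭))
    exact this (by rw [hmap, map_zero])
  choose y hy using fun i : Fin n => Ideal.Quotient.mk_surjective (x i)
  obtain ⟨c, hc⟩ := Ideal.Quotient.mk_surjective (b : A ⧸ 𝔭)
  have hcnot : c ∉ 𝔭 := by
    intro h
    exact hbne (hc ▸ (Ideal.Quotient.eq_zero_iff_mem.mpr h))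
  have hmem : (∑ i, y i ^ 2 + c ^ 2 : A) ∈ 𝔭 := by
    rw [← Ideal.Quotient.eq_zero_iff_mem]
    push_cast [map_add, map_sum, map_pow, hy, hc]
    simpa [hy, hc] using hker
  obtain ⟨s, hs, a', hsa⟩ := key c hcnot
  refine hdisj (s * s + ∑ i, (a' * y i) ^ 2) (hsq _ (hmul s hs s hs) n _) ?_
  have hrw : s * s + ∑ i, (a' * y i) ^ 2
      = (s - a' * c) * (s + a' * c) + a' ^ 2 * (∑ i, y i ^ 2 + c ^ 2) := by
    have h2 : ∑ i, (a' * y i) ^ 2 = a' ^ 2 * ∑ i, y i ^ 2 := by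
      rw [Finset.mul_sum]
      simp_rw [mul_pow]
    rw [h2]
    ring
  rw [hrw]
  exact add_mem (Ideal.mul_mem_right _ _ hsa) (Ideal.mul_mem_left _ _ hmem)
end

section
/- Let $A$ be a commutative ring, $\mathfrak{a} \subseteq A$ an ideal, and $f \in A$. Then $f$ lies in the real radical of $\mathfrak{a}$ (the intersection of all real prime ideals containing $\mathfrak{a}$) if and only if there exist $m \in \mathbb{N}$ and $a_1,\ldots,a_r \in A$ such that $f^{2m} + a_1^2 + \cdots + a_r^2 \in \mathfrak{a}$. -/
section Aux

variable {A : Type*} [CommRing A]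

private lemma isSumSq_mul_sq (a : A) {S : A} (h : IsSumSq S) : IsSumSq (a ^ 2 * S) := by
  induction h with
  | zero => simpa using IsSumSq.zero
  | @sq_add b T hT ih =>
      have : a ^ 2 * (b * b + T) = (a * b) * (a * b) + a ^ 2 * T := by ring
      rw [this]
      exact IsSumSq.sq_add _ ih

private lemma isSumSq_mul {S T : A} (hS : IsSumSq S) (hT : IsSumSq T) : IsSumSq (S * T) := by
  induction hS with
  | zero => simpa using IsSumSq.zero
  | @sq_add a S' hS' ih =>
      have : (a * a + S') * T = a ^ 2 * T + S' * T := by ring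
      rw [this]
      exact (isSumSq_mul_sq a hT).add ih

private lemma isSumSq_iff_fin (x : A) :
    IsSumSq x ↔ ∃ (r : ℕ) (a : Fin r → A), x = ∑ i, a i ^ 2 := by
  constructor
  · intro h
    induction h with
    | zero => exact ⟨0, ![], by simp⟩
    | @sq_add a S hS ih =>
        obtain ⟨r, b, rfl⟩ := ih
        refine ⟨r + 1, Fin.cons a b, ?_⟩
        simp [Fin.sum_univ_succ, sq]
  · rintro ⟨r, a, rfl⟩
    simp only [sq]
    exact IsSumSq.sum_mul_self _ _

/-- The multiplicative set of elements of the form `f ^ (2m) + (sum of squares)`. -/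
private def sosMonoid (f : A) : Submonoid A where
  carrier := {x | ∃ (m : ℕ) (s : A), IsSumSq s ∧ x = f ^ (2 * m) + s}
  one_mem' := ⟨0, 0, IsSumSq.zero, by simp⟩
  mul_mem' := by
    rintro x y ⟨m, s, hs, rfl⟩ ⟨n, t, ht, rfl⟩
    refine ⟨m + n, f ^ (2 * m) * t + f ^ (2 * n) * s + s * t, ?_, by ring⟩
    have h1 : f ^ (2 * m) * t = (f ^ m) ^ 2 * t := by ring
    have h2 : f ^ (2 * n) * s = (f ^ n) ^ 2 * s := by ring
    rw [h1, h2]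
    exact ((isSumSq_mul_sq _ ht).add (isSumSq_mul_sq _ hs)).add (isSumSq_mul hs ht)

private lemma mem_sosMonoid {f x : A} :
    x ∈ sosMonoid f ↔ ∃ (m : ℕ) (s : A), IsSumSq s ∧ x = f ^ (2 * m) + s := Iff.rfl

private lemma sosMonoid_add_isSumSq {f x σ : A} (hx : x ∈ sosMonoid f) (hσ : IsSumSq σ) :
    x + σ ∈ sosMonoid f := by
  obtain ⟨m, s, hs, rfl⟩ := hx
  exact ⟨m, s + σ, hs.add hσ, by ring⟩

/-- An ideal maximal among those disjoint from `sosMonoid f` is real. -/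
private lemma real_of_max (f : A) (p : Ideal A) (hp : p.IsPrime)
    (hdisj : Disjoint (p : Set A) (sosMonoid f : Set A))
    (hmax : ∀ J : Ideal A, p < J → ¬ Disjoint (J : Set A) (sosMonoid f : Set A)) :
    ∀ (n : ℕ) (a : Fin n → FractionRing (A ⧸ p)), ∑ i, a i ^ 2 ≠ -1 := by
  intro n a hcontra
  letI := hp
  have hsurj : ∀ i, ∃ (xi : A ⧸ p) (si : nonZeroDivisors (A ⧸ p)),
      a i * algebraMap (A ⧸ p) (FractionRing (A ⧸ p)) si = algebraMap (A ⧸ p) (FractionRing (A ⧸ p)) xi := by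
    intro i
    obtain ⟨⟨xi, si⟩, h⟩ := IsLocalization.surj (nonZeroDivisors (A ⧸ p)) (a i)
    exact ⟨xi, si, h⟩
  choose x s hxs using hsurj
  set S : A ⧸ p := ∏ i, ((s i : A ⧸ p)) with hS
  have hSne : S ≠ 0 :=
    Finset.prod_ne_zero_iff.mpr fun i _ => nonZeroDivisors.ne_zero (s i).2
  set c : Fin n → A ⧸ p := fun i => x i * ∏ j ∈ Finset.univ.erase i, ((s j : A ⧸ p)) with hc
  have key : ∀ i, a i * algebraMap (A ⧸ p) (FractionRing (A ⧸ p)) S = algebraMap (A ⧸ p) (FractionRing (A ⧸ p)) (c i) := by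
    intro i
    have h1 : S = (s i : A ⧸ p) * ∏ j ∈ Finset.univ.erase i, ((s j : A ⧸ p)) :=
      (Finset.mul_prod_erase _ _ (Finset.mem_univ i)).symm
    rw [h1, hc, map_mul, map_mul, ← mul_assoc, hxs i]
  have hzero : ∑ i, c i ^ 2 + S ^ 2 = 0 := by
    apply IsFractionRing.injective (A ⧸ p) (FractionRing (A ⧸ p))
    rw [map_zero, map_add, map_pow, map_sum]
    simp_rw [map_pow, ← key, mul_pow]
    rw [← Finset.sum_mul, hcontra]
    ring
  obtain ⟨t, ht⟩ := Ideal.Quotient.mk_surjective S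
  have he : ∀ i, ∃ e : A, Ideal.Quotient.mk p e = c i :=
    fun i => Ideal.Quotient.mk_surjective (c i)
  choose e he using he
  have htp : t ∉ p := by
    intro h
    exact hSne (ht ▸ Ideal.Quotient.eq_zero_iff_mem.mpr h)
  have hmem : t ^ 2 + ∑ i, e i ^ 2 ∈ p := by
    rw [← Ideal.Quotient.eq_zero_iff_mem, map_add, map_pow, map_sum]
    simp_rw [map_pow, he, ht]
    rw [add_comm]
    exact hzero
  have hJ : p < p ⊔ Ideal.span {t} := Submodule.lt_sup_iff_notMem.mpr htp
  have hnd := hmax _ hJ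
  rw [Set.not_disjoint_iff] at hnd
  obtain ⟨y, hyJ, hyM⟩ := hnd
  rw [SetLike.mem_coe, Submodule.mem_sup] at hyJ
  obtain ⟨q, hq, w, hw, rfl⟩ := hyJ
  rw [Ideal.mem_span_singleton'] at hw
  obtain ⟨d, rfl⟩ := hw
  set y := q + d * t with hy
  have hyM' : y ∈ sosMonoid f := hyM
  have hsumsq : IsSumSq (d ^ 2 * ∑ i, e i ^ 2) := by
    apply isSumSq_mul_sq
    simp only [sq]
    exact IsSumSq.sum_mul_self _ _
  have hyp2 : y * y + d ^ 2 * ∑ i, e i ^ 2 ∈ sosMonoid f :=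
    sosMonoid_add_isSumSq (Submonoid.mul_mem _ hyM' hyM') hsumsq
  have hpmem : y * y + d ^ 2 * ∑ i, e i ^ 2 ∈ p := by
    have heq : y * y + d ^ 2 * ∑ i, e i ^ 2
        = q * (q + 2 * (d * t)) + d ^ 2 * (t ^ 2 + ∑ i, e i ^ 2) := by
      rw [hy]; ring
    rw [heq]
    exact Ideal.add_mem _ (Ideal.mul_mem_right _ _ hq) (Ideal.mul_mem_left _ _ hmem)
  exact Set.disjoint_left.mp hdisj hpmem hyp2

end Aux

theorem mem_real_radical_iff
    {A : Type*} [CommRing A] (𝔞 : Ideal A) (f : A) :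
    (∀ p : Ideal A, p.IsRealPrime → 𝔞 ≤ p → f ∈ p) ↔
      ∃ (m r : ℕ) (a : Fin r → A), f ^ (2 * m) + ∑ i, a i ^ 2 ∈ 𝔞 := by
  constructor
  · intro H
    by_contra hrep
    push_neg at hrep
    have hdisj : Disjoint (𝔞 : Set A) (sosMonoid f : Set A) := by
      rw [Set.disjoint_left]
      rintro z hz hzM
      obtain ⟨m, s, hs, rfl⟩ := mem_sosMonoid.mp hzM
      obtain ⟨r, b, rfl⟩ := (isSumSq_iff_fin s).mp hs
      exact hrep m r b hz
    have hchain : ∀ c ⊆ {p : Ideal A | Disjoint (p : Set A) (sosMonoid f : Set A)},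
        IsChain (· ≤ ·) c → ∀ J ∈ c,
        ∃ ub ∈ {p : Ideal A | Disjoint (p : Set A) (sosMonoid f : Set A)}, ∀ z ∈ c, z ≤ ub := by
      intro c hc hc' J hJ
      cases isEmpty_or_nonempty c
      · exact ⟨J, hc hJ, fun I hI => isEmptyElim (⟨I, hI⟩ : c)⟩
      refine ⟨sSup c, Set.disjoint_left.mpr fun z hz => ?_, fun _ => le_sSup⟩
      have ⟨I, hI⟩ := (Submodule.mem_iSup_of_directed _ hc'.directed).mp (sSup_eq_iSup' c ▸ hz)
      exact Set.disjoint_left.mp (hc I.2) hI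
    obtain ⟨p, hle, hp⟩ := zorn_le_nonempty₀
      {p : Ideal A | Disjoint (p : Set A) (sosMonoid f : Set A)} hchain 𝔞 hdisj
    have hPrime : p.IsPrime :=
        Ideal.isPrime_of_maximally_disjoint p (sosMonoid f) hp.1 (fun _ => hp.not_prop_of_gt)
    have hreal := real_of_max f p hPrime hp.1 (fun _ => hp.not_prop_of_gt)
    have hfp : f ∈ p := H p ⟨hPrime, hreal⟩ hle
    have hffM : f * f ∈ sosMonoid f :=
      mem_sosMonoid.mpr ⟨1, 0, IsSumSq.zero, by ring⟩
    exact Set.disjoint_left.mp hp.1 (p.mul_mem_left f hfp) hffM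
  · rintro ⟨m, r, a, ha⟩ p hpr hle
    obtain ⟨hp, hreal⟩ := hpr
    letI := hp
    by_contra hf
    set φ : A →+* FractionRing (A ⧸ p) :=
      (algebraMap (A ⧸ p) (FractionRing (A ⧸ p))).comp (Ideal.Quotient.mk p) with hφ
    have hker : φ (f ^ (2 * m) + ∑ i, a i ^ 2) = 0 := by
      have h0 : Ideal.Quotient.mk p (f ^ (2 * m) + ∑ i, a i ^ 2) = 0 :=
        Ideal.Quotient.eq_zero_iff_mem.mpr (hle ha)
      rw [hφ, RingHom.comp_apply, h0, map_zero]
    have hfne : φ f ≠ 0 := by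
      intro h0
      apply hf
      apply Ideal.Quotient.eq_zero_iff_mem.mp
      apply IsFractionRing.injective (A ⧸ p) (FractionRing (A ⧸ p))
      rw [map_zero]
      exact h0
    have hu : (φ f ^ m) ≠ 0 := pow_ne_zero _ hfne
    apply hreal r (fun i => φ (a i) * (φ f ^ m)⁻¹)
    have hsum : ∑ i, φ (a i) ^ 2 = -(φ f ^ m) ^ 2 := by
      rw [map_add, map_pow, map_sum] at hker
      simp_rw [map_pow] at hker
      have h2m : φ f ^ (2 * m) = (φ f ^ m) ^ 2 := by rw [← pow_mul, mul_comm]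
      rw [h2m] at hker
      exact eq_neg_of_add_eq_zero_right hker
    simp_rw [mul_pow]
    rw [← Finset.sum_mul, hsum]
    field_simp
end

section
/- Let $K$ be a field, $\Lambda_1,\ldots,\Lambda_n \subseteq K$ finite nonempty subsets, and $g_i(X_i) = \prod_{a \in \Lambda_i}(X_i - a)$. Then the ideal of all polynomials in $K[X_1,\ldots,X_n]$ vanishing on $\Lambda_1 \times \cdots \times \Lambda_n$ is exactly the ideal generated by $g_1(X_1),\ldots,g_n(X_n)$ (Alon's Combinatorial Nullstellensatz, ideal form). -/
open MvPolynomial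

private lemma cn_symm_C {K : Type*} [Field K] {n : ℕ} (p : MvPolynomial (Fin n) K) :
    (finSuccEquiv K n).symm (Polynomial.C p) = rename Fin.succ p := by
  apply (finSuccEquiv K n).injective
  rw [AlgEquiv.apply_symm_apply]
  have : (finSuccEquiv K n).toAlgHom.comp (rename Fin.succ) =
      (Polynomial.CAlgHom : MvPolynomial (Fin n) K →ₐ[K] _) := by
    apply MvPolynomial.algHom_ext
    intro j
    simp [finSuccEquiv_X_succ, Polynomial.CAlgHom]
  calc Polynomial.C p = ((finSuccEquiv K n).toAlgHom.comp (rename Fin.succ)) p := by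
        rw [this]; rfl
    _ = _ := rfl

private lemma cn_hard {K : Type*} [Field K] : ∀ (n : ℕ) (Λ : Fin n → Finset K),
    (∀ i, (Λ i).Nonempty) → ∀ f : MvPolynomial (Fin n) K,
    (∀ a : Fin n → K, (∀ i, a i ∈ Λ i) → eval a f = 0) →
    f ∈ Ideal.span (Set.range fun i : Fin n =>
      ∏ c ∈ Λ i, (X i - C c : MvPolynomial (Fin n) K)) := by
  intro n
  induction n with
  | zero =>
    intro Λ hΛ f hf
    have h0 : f = 0 := by
      rw [eq_C_of_isEmpty f]
      have := hf (fun i => i.elim0) (fun i => i.elim0)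
      rw [eq_C_of_isEmpty f, eval_C] at this
      rw [this, map_zero]
    simp [h0]
  | succ n ih =>
    intro Λ hΛ f hf
    set e := finSuccEquiv K n with he
    set G : Polynomial (MvPolynomial (Fin n) K) :=
      ∏ c ∈ Λ 0, (Polynomial.X - Polynomial.C (C c)) with hG
    have hGmonic : G.Monic :=
      Polynomial.monic_prod_of_monic _ _ fun c _ => Polynomial.monic_X_sub_C _
    set r := (e f) %ₘ G with hr
    set q := (e f) /ₘ G with hq
    have hdiv : r + G * q = e f := Polynomial.modByMonic_add_div (e f) G
    have hdegG : G.natDegree = (Λ 0).card := by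
      rw [hG, Polynomial.natDegree_prod_of_monic _ _ fun c _ => Polynomial.monic_X_sub_C _]
      simp
    have hGne1 : G ≠ 1 := by
      intro h
      have : G.natDegree = 0 := by rw [h, Polynomial.natDegree_one]
      rw [hdegG] at this
      exact absurd (Finset.card_eq_zero.mp this) (hΛ 0).ne_empty
    have hrdeg : r.natDegree < (Λ 0).card := by
      rw [← hdegG]
      exact Polynomial.natDegree_modByMonic_lt _ hGmonic hGne1
    -- each coefficient of r vanishes on the tail grid
    have hcoeff : ∀ k, ∀ s : Fin n → K, (∀ i, s i ∈ Λ i.succ) →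
        eval s (r.coeff k) = 0 := by
      intro k s hs
      have hmap : Polynomial.map (eval s) r = 0 := by
        apply Polynomial.eq_zero_of_natDegree_lt_card_of_eval_eq_zero' _ (Λ 0)
        · intro y hy
          have h1 : eval (Fin.cons y s : Fin (n + 1) → K) f = 0 := by
            apply hf
            intro i
            refine Fin.cases ?_ ?_ i
            · simpa using hy
            · intro j; simpa using hs j
          rw [eval_eq_eval_mv_eval'] at h1
          rw [← hdiv, Polynomial.map_add, Polynomial.map_mul, Polynomial.eval_add,
            Polynomial.eval_mul] at h1
          have hGeval : Polynomial.eval y (Polynomial.map (eval s) G) = 0 := by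
            rw [hG, Polynomial.map_prod]
            rw [Polynomial.eval_prod]
            apply Finset.prod_eq_zero hy
            simp
          rw [hGeval, zero_mul, add_zero] at h1
          exact h1
        · exact lt_of_le_of_lt Polynomial.natDegree_map_le hrdeg
      have := congrArg (fun p => Polynomial.coeff p k) hmap
      simpa using this
    -- apply the induction hypothesis to each coefficient
    have hmem : ∀ k, r.coeff k ∈ Ideal.span (Set.range fun i : Fin n =>
        ∏ c ∈ Λ i.succ, (X i - C c : MvPolynomial (Fin n) K)) := by
      intro k
      exact ih (fun i => Λ i.succ) (fun i => hΛ i.succ) _ (hcoeff k)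
    -- transfer to Fin (n+1)
    set I := Ideal.span (Set.range fun i : Fin (n + 1) =>
      ∏ c ∈ Λ i, (X i - C c : MvPolynomial (Fin (n + 1)) K)) with hI
    have hrename : ∀ k, rename Fin.succ (r.coeff k) ∈ I := by
      intro k
      have h1 : rename Fin.succ (r.coeff k) ∈ Ideal.map (rename Fin.succ : MvPolynomial (Fin n) K →ₐ[K] _).toRingHom
          (Ideal.span (Set.range fun i : Fin n =>
            ∏ c ∈ Λ i.succ, (X i - C c : MvPolynomial (Fin n) K))) :=
        Ideal.mem_map_of_mem _ (hmem k)
      rw [Ideal.map_span] at h1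
      refine Ideal.span_le.mpr ?_ h1
      rintro x ⟨y, ⟨i, rfl⟩, rfl⟩
      apply Ideal.subset_span
      refine ⟨i.succ, ?_⟩
      simp [map_prod]
    have hsymm_r : (e).symm r ∈ I := by
      rw [← Polynomial.sum_C_mul_X_pow_eq r, Polynomial.sum, map_sum]
      apply Ideal.sum_mem
      intro k _
      rw [map_mul, cn_symm_C]
      apply Ideal.mul_mem_right
      exact hrename k
    have hsymm_G : (e).symm G = ∏ c ∈ Λ 0, (X 0 - C c : MvPolynomial (Fin (n + 1)) K) := by
      rw [hG, map_prod]
      apply Finset.prod_congr rfl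
      intro c _
      rw [map_sub]
      congr 1
      · apply (finSuccEquiv K n).injective
        rw [AlgEquiv.apply_symm_apply, finSuccEquiv_X_zero]
      · apply (finSuccEquiv K n).injective
        rw [AlgEquiv.apply_symm_apply]
        simp [finSuccEquiv_apply]
    have : f = (e).symm r + (e).symm G * (e).symm q := by
      rw [← map_mul, ← map_add, hdiv, AlgEquiv.symm_apply_apply]
    rw [this]
    apply Ideal.add_mem
    · exact hsymm_r
    · apply Ideal.mul_mem_right
      rw [hsymm_G]
      exact Ideal.subset_span ⟨0, rfl⟩

theorem combinatorial_nullstellensatz_ideal_form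
    {K : Type*} [Field K] {n : ℕ}
    (Λ : Fin n → Finset K) (hΛ : ∀ i, (Λ i).Nonempty)
    (f : MvPolynomial (Fin n) K) :
    (∀ a : Fin n → K, (∀ i, a i ∈ Λ i) → eval a f = 0) ↔
      f ∈ Ideal.span (Set.range fun i : Fin n =>
        ∏ c ∈ Λ i, (X i - C c : MvPolynomial (Fin n) K)) := by
  constructor
  · exact cn_hard n Λ hΛ f
  · intro hf a ha
    have hle : Ideal.span (Set.range fun i : Fin n =>
        ∏ c ∈ Λ i, (X i - C c : MvPolynomial (Fin n) K)) ≤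
        RingHom.ker (eval a : MvPolynomial (Fin n) K →+* K) := by
      rw [Ideal.span_le]
      rintro x ⟨i, rfl⟩
      rw [SetLike.mem_coe, RingHom.mem_ker]
      simp only [map_prod, map_sub, eval_X, eval_C]
      exact Finset.prod_eq_zero (ha i) (sub_self _)
    exact hle hf
end

section
/- Let $p$ be a prime and $M, N$ nonempty subsets of $\mathbb{Z}/p\mathbb{Z}$. Define the restricted sumset $L = \{a + b : a \in M, b \in N, a \neq b\}$. Then $|L| \geq \min(p, |M| + |N| - 3)$ (Erdős–Heilbronn conjecture). -/
set_option linter.unusedSectionVars false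

open Finset Polynomial MvPolynomial

section CoeffFormula

variable {F : Type*} [Field F] [DecidableEq F]

lemma basis_eq_C_mul_nodal {s : Finset F} {a : F} (ha : a ∈ s) :
    Lagrange.basis s id a =
      Polynomial.C (Lagrange.nodalWeight s id a) * Lagrange.nodal (s.erase a) id := by
  rw [Lagrange.basis_eq_prod_sub_inv_mul_nodal_div ha, Lagrange.nodal_erase_eq_nodal_div ha]

lemma sum_pow_mul_nodalWeight (S : Finset F) (i : ℕ) (hi : i < S.card) :
    ∑ a ∈ S, a ^ i * Lagrange.nodalWeight S id a
      = if i = S.card - 1 then 1 else 0 := by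
  have hinj : Set.InjOn id (S : Set F) := fun x _ y _ h => h
  have h1 : (Polynomial.X ^ i : F[X]) = Lagrange.interpolate S id (fun a => a ^ i) := by
    have := Lagrange.eq_interpolate (f := (Polynomial.X ^ i : F[X])) hinj
      (by rw [Polynomial.degree_X_pow]; exact_mod_cast hi)
    simpa using this
  have h2 := congrArg (fun q : F[X] => q.coeff (S.card - 1)) h1
  simp only [Polynomial.coeff_X_pow] at h2
  rw [Lagrange.interpolate_apply] at h2
  rw [Polynomial.finset_sum_coeff] at h2
  have h3 : ∀ a ∈ S, (Polynomial.C (a ^ i) * Lagrange.basis S id a).coeff (S.card - 1)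
      = a ^ i * Lagrange.nodalWeight S id a := by
    intro a ha
    rw [basis_eq_C_mul_nodal ha, ← mul_assoc, ← Polynomial.C_mul, Polynomial.coeff_C_mul]
    have hmon : (Lagrange.nodal (S.erase a) id).Monic := Lagrange.nodal_monic
    have hdeg : (Lagrange.nodal (S.erase a) id).natDegree = S.card - 1 := by
      rw [Lagrange.natDegree_nodal, card_erase_of_mem ha]
    rw [← hdeg, hmon.coeff_natDegree, mul_one]
  rw [Finset.sum_congr rfl h3] at h2
  rw [← h2]
  simp [eq_comm]

lemma fin2_finsupp_eq (d : Fin 2 →₀ ℕ) (s t : ℕ) :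
    d = Finsupp.single 0 s + Finsupp.single 1 t ↔ d 0 = s ∧ d 1 = t := by
  constructor
  · rintro rfl
    simp [Finsupp.single_apply]
  · rintro ⟨h0, h1⟩
    ext i
    fin_cases i <;> simp [Finsupp.single_apply, ← h0, ← h1]

lemma eval_pair (a b : F) (f : MvPolynomial (Fin 2) F) :
    MvPolynomial.eval ![a, b] f
      = ∑ d ∈ f.support, MvPolynomial.coeff d f * (a ^ d 0 * b ^ d 1) := by
  conv_lhs => rw [f.as_sum]
  rw [map_sum]
  refine Finset.sum_congr rfl fun d _ => ?_
  rw [MvPolynomial.eval_monomial]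
  congr 1
  rw [Finsupp.prod_fintype _ _ (fun i => pow_zero _), Fin.prod_univ_two]
  simp

lemma coeff_formula (M N : Finset F) (hM : M.Nonempty) (hN : N.Nonempty)
    (f : MvPolynomial (Fin 2) F)
    (hdeg : f.totalDegree ≤ M.card - 1 + (N.card - 1)) :
    ∑ a ∈ M, ∑ b ∈ N,
        Lagrange.nodalWeight M id a * Lagrange.nodalWeight N id b
          * MvPolynomial.eval ![a, b] f
      = MvPolynomial.coeff (Finsupp.single 0 (M.card - 1) + Finsupp.single 1 (N.card - 1)) f := by
  set t₁ := M.card - 1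
  set t₂ := N.card - 1
  have key : ∑ a ∈ M, ∑ b ∈ N,
      Lagrange.nodalWeight M id a * Lagrange.nodalWeight N id b
        * MvPolynomial.eval ![a, b] f
      = ∑ d ∈ f.support, MvPolynomial.coeff d f *
          ((∑ a ∈ M, a ^ d 0 * Lagrange.nodalWeight M id a)
            * (∑ b ∈ N, b ^ d 1 * Lagrange.nodalWeight N id b)) := by
    have : ∀ a ∈ M, ∀ b ∈ N,
        Lagrange.nodalWeight M id a * Lagrange.nodalWeight N id b
          * MvPolynomial.eval ![a, b] f
        = ∑ d ∈ f.support, MvPolynomial.coeff d f *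
            ((a ^ d 0 * Lagrange.nodalWeight M id a) * (b ^ d 1 * Lagrange.nodalWeight N id b)) := by
      intro a _ b _
      rw [eval_pair, Finset.mul_sum]
      exact Finset.sum_congr rfl fun d _ => by ring
    calc ∑ a ∈ M, ∑ b ∈ N, Lagrange.nodalWeight M id a * Lagrange.nodalWeight N id b
            * MvPolynomial.eval ![a, b] f
        = ∑ a ∈ M, ∑ b ∈ N, ∑ d ∈ f.support, MvPolynomial.coeff d f *
            ((a ^ d 0 * Lagrange.nodalWeight M id a) * (b ^ d 1 * Lagrange.nodalWeight N id b)) :=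
          Finset.sum_congr rfl fun a ha => Finset.sum_congr rfl fun b hb => this a ha b hb
      _ = ∑ d ∈ f.support, ∑ a ∈ M, ∑ b ∈ N, MvPolynomial.coeff d f *
            ((a ^ d 0 * Lagrange.nodalWeight M id a) * (b ^ d 1 * Lagrange.nodalWeight N id b)) := by
          exact (Finset.sum_congr rfl fun a _ => Finset.sum_comm).trans Finset.sum_comm
      _ = ∑ d ∈ f.support, MvPolynomial.coeff d f *
            ((∑ a ∈ M, a ^ d 0 * Lagrange.nodalWeight M id a)
              * (∑ b ∈ N, b ^ d 1 * Lagrange.nodalWeight N id b)) := by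
          refine Finset.sum_congr rfl fun d _ => ?_
          rw [Finset.sum_mul_sum, Finset.mul_sum]
          exact Finset.sum_congr rfl fun a _ => by rw [Finset.mul_sum]
  rw [key]
  have hterm : ∀ d ∈ f.support, MvPolynomial.coeff d f *
      ((∑ a ∈ M, a ^ d 0 * Lagrange.nodalWeight M id a)
        * (∑ b ∈ N, b ^ d 1 * Lagrange.nodalWeight N id b))
      = if d = Finsupp.single 0 t₁ + Finsupp.single 1 t₂ then MvPolynomial.coeff d f else 0 := by
    intro d hd
    have hsum : d 0 + d 1 ≤ t₁ + t₂ := by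
      have h1 : d.sum (fun _ n => n) ≤ f.totalDegree :=
        MvPolynomial.le_totalDegree hd
      have h2 : d.sum (fun _ n => n) = d 0 + d 1 := by
        rw [Finsupp.sum_fintype _ _ (fun i => rfl), Fin.sum_univ_two]
      omega
    simp only [fin2_finsupp_eq]
    by_cases h0 : d 0 ≤ t₁
    · by_cases h1 : d 1 ≤ t₂
      · rw [sum_pow_mul_nodalWeight M (d 0) (by have := hM.card_pos; omega),
          sum_pow_mul_nodalWeight N (d 1) (by have := hN.card_pos; omega)]
        by_cases e0 : d 0 = t₁ <;> by_cases e1 : d 1 = t₂ <;>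
          simp [e0, e1, show M.card - 1 = t₁ from rfl, show N.card - 1 = t₂ from rfl]
      · have h0' : ¬ (d 0 = t₁) := by omega
        rw [sum_pow_mul_nodalWeight M (d 0) (by have := hM.card_pos; omega)]
        simp [show ¬ (d 0 = t₁) from h0', show M.card - 1 = t₁ from rfl, show N.card - 1 = t₂ from rfl]
    · have h1' : d 1 ≤ t₂ := by omega
      rw [sum_pow_mul_nodalWeight N (d 1) (by have := hN.card_pos; omega)]
      have : ¬ (d 1 = t₂) := by omega
      simp [this, show ¬ (d 0 = t₁ ∧ d 1 = t₂) from fun h => h0 (le_of_eq h.1), show M.card - 1 = t₁ from rfl, show N.card - 1 = t₂ from rfl]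
  rw [Finset.sum_congr rfl hterm, Finset.sum_ite_eq' f.support]
  split
  · rfl
  · exact (MvPolynomial.notMem_support_iff.mp (by assumption)).symm

lemma coeff_X0_pow_X1_pow (a b n : ℕ) (d : Fin 2 →₀ ℕ) :
    MvPolynomial.coeff d ((MvPolynomial.X 0 : MvPolynomial (Fin 2) F) ^ a
        * MvPolynomial.X 1 ^ b * (n : MvPolynomial (Fin 2) F))
      = if d = Finsupp.single 0 a + Finsupp.single 1 b then (n : F) else 0 := by
  rw [MvPolynomial.X_pow_eq_monomial, MvPolynomial.X_pow_eq_monomial,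
    MvPolynomial.monomial_mul, ← MvPolynomial.C_eq_coe_nat, mul_comm,
    MvPolynomial.C_mul_monomial, MvPolynomial.coeff_monomial]
  simp [eq_comm]

lemma coeff_key (k t₁ t₂ : ℕ) (ht : t₁ + t₂ = k + 1) (ht₁ : 1 ≤ t₁) :
    MvPolynomial.coeff (Finsupp.single 0 t₁ + Finsupp.single 1 t₂)
        ((MvPolynomial.X 0 - MvPolynomial.X 1)
          * (MvPolynomial.X 0 + MvPolynomial.X 1) ^ k : MvPolynomial (Fin 2) F)
      = (Nat.choose k (t₁ - 1) : F) - (Nat.choose k t₁ : F) := by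
  rw [add_pow]
  rw [sub_mul, Finset.mul_sum, Finset.mul_sum]
  rw [MvPolynomial.coeff_sub, MvPolynomial.coeff_sum, MvPolynomial.coeff_sum]
  have h1 : ∀ i ∈ Finset.range (k + 1),
      MvPolynomial.coeff (Finsupp.single 0 t₁ + Finsupp.single 1 t₂)
        ((MvPolynomial.X 0 : MvPolynomial (Fin 2) F) *
          (MvPolynomial.X 0 ^ i * MvPolynomial.X 1 ^ (k - i) * (Nat.choose k i : MvPolynomial (Fin 2) F)))
      = if i = t₁ - 1 then (Nat.choose k i : F) else 0 := by
    intro i hi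
    rw [Finset.mem_range] at hi
    have : (MvPolynomial.X 0 : MvPolynomial (Fin 2) F) *
        (MvPolynomial.X 0 ^ i * MvPolynomial.X 1 ^ (k - i) * (Nat.choose k i : MvPolynomial (Fin 2) F))
        = MvPolynomial.X 0 ^ (i+1) * MvPolynomial.X 1 ^ (k - i) * (Nat.choose k i : MvPolynomial (Fin 2) F) := by
      ring
    rw [this, coeff_X0_pow_X1_pow]
    have : (Finsupp.single 0 t₁ + Finsupp.single 1 t₂ : Fin 2 →₀ ℕ)
        = Finsupp.single 0 (i+1) + Finsupp.single 1 (k - i) ↔ i = t₁ - 1 := by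
      rw [fin2_finsupp_eq]
      simp only [Finsupp.add_apply, Finsupp.single_apply]
      norm_num
      omega
    rw [if_congr this rfl rfl]
  have h2 : ∀ i ∈ Finset.range (k + 1),
      MvPolynomial.coeff (Finsupp.single 0 t₁ + Finsupp.single 1 t₂)
        ((MvPolynomial.X 1 : MvPolynomial (Fin 2) F) *
          (MvPolynomial.X 0 ^ i * MvPolynomial.X 1 ^ (k - i) * (Nat.choose k i : MvPolynomial (Fin 2) F)))
      = if i = t₁ then (Nat.choose k i : F) else 0 := by
    intro i hi
    rw [Finset.mem_range] at hi
    have : (MvPolynomial.X 1 : MvPolynomial (Fin 2) F) *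
        (MvPolynomial.X 0 ^ i * MvPolynomial.X 1 ^ (k - i) * (Nat.choose k i : MvPolynomial (Fin 2) F))
        = MvPolynomial.X 0 ^ i * MvPolynomial.X 1 ^ (k - i + 1) * (Nat.choose k i : MvPolynomial (Fin 2) F) := by
      rw [pow_succ]; ring
    rw [this, coeff_X0_pow_X1_pow]
    have : (Finsupp.single 0 t₁ + Finsupp.single 1 t₂ : Fin 2 →₀ ℕ)
        = Finsupp.single 0 i + Finsupp.single 1 (k - i + 1) ↔ i = t₁ := by
      rw [fin2_finsupp_eq]
      simp only [Finsupp.add_apply, Finsupp.single_apply]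
      norm_num
      omega
    rw [if_congr this rfl rfl]
  rw [Finset.sum_congr rfl h1, Finset.sum_congr rfl h2,
    Finset.sum_ite_eq' (Finset.range (k+1)), Finset.sum_ite_eq' (Finset.range (k+1))]
  rw [if_pos (show t₁ - 1 ∈ Finset.range (k+1) by rw [Finset.mem_range]; omega)]
  by_cases h : t₁ ≤ k
  · rw [if_pos (show t₁ ∈ Finset.range (k+1) by rw [Finset.mem_range]; omega)]
  · rw [if_neg (show t₁ ∉ Finset.range (k+1) by rw [Finset.mem_range]; omega)]
    rw [Nat.choose_eq_zero_of_lt (show k < t₁ by omega), Nat.cast_zero, sub_zero]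

lemma XY_totalDegree : ((X 0 + X 1 : MvPolynomial (Fin 2) F)).totalDegree ≤ 1 :=
  (totalDegree_add _ _).trans (by simp [totalDegree_X])

lemma prod_totalDegree (s : Finset F) :
    (∏ c ∈ s, ((X 0 + X 1 : MvPolynomial (Fin 2) F) - MvPolynomial.C c)).totalDegree ≤ s.card := by
  refine (totalDegree_finset_prod s _).trans ?_
  have h1 : ∀ c ∈ s, ((X 0 + X 1 : MvPolynomial (Fin 2) F) - MvPolynomial.C c).totalDegree ≤ 1 := by
    intro c _
    refine (totalDegree_sub _ _).trans (max_le XY_totalDegree ?_)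
    simp [totalDegree_C]
  exact (Finset.sum_le_card_nsmul s _ 1 h1).trans (by simp)

lemma prod_sub_pow (C : Finset F) :
    (∏ c ∈ C, ((X 0 + X 1 : MvPolynomial (Fin 2) F) - MvPolynomial.C c)
        - (X 0 + X 1) ^ C.card) = 0 ∨
    (∏ c ∈ C, ((X 0 + X 1 : MvPolynomial (Fin 2) F) - MvPolynomial.C c)
        - (X 0 + X 1) ^ C.card).totalDegree < C.card := by
  classical
  induction C using Finset.induction_on with
  | empty => left; simp
  | @insert c s hc ih =>
    right
    have hins : ∏ x ∈ insert c s, ((X 0 + X 1 : MvPolynomial (Fin 2) F) - MvPolynomial.C x)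
        = ((X 0 + X 1) - MvPolynomial.C c) * ∏ x ∈ s, ((X 0 + X 1) - MvPolynomial.C x) :=
      Finset.prod_insert hc
    have hkey : ∏ x ∈ insert c s, ((X 0 + X 1 : MvPolynomial (Fin 2) F) - MvPolynomial.C x)
          - (X 0 + X 1) ^ (insert c s).card
        = (X 0 + X 1) * (∏ x ∈ s, ((X 0 + X 1) - MvPolynomial.C x) - (X 0 + X 1) ^ s.card)
          - MvPolynomial.C c * ∏ x ∈ s, ((X 0 + X 1) - MvPolynomial.C x) := by
      rw [hins, Finset.card_insert_of_notMem hc, pow_succ]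
      ring
    rw [hkey, Finset.card_insert_of_notMem hc]
    refine lt_of_le_of_lt ((totalDegree_sub _ _).trans ?_) (Nat.lt_succ_self _)
    refine max_le ?_ ?_
    · rcases ih with h0 | hlt
      · rw [h0, mul_zero]
        simp
      · refine (totalDegree_mul _ _).trans ?_
        have := XY_totalDegree (F := F)
        omega
    · refine (totalDegree_mul _ _).trans ?_
      have := prod_totalDegree (F := F) s
      simp only [totalDegree_C]
      omega

lemma fin2_support_sum (s t : ℕ) :
    ∑ i ∈ (Finsupp.single 0 s + Finsupp.single 1 t : Fin 2 →₀ ℕ).support,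
      (Finsupp.single 0 s + Finsupp.single 1 t : Fin 2 →₀ ℕ) i = s + t := by
  have : ∑ i ∈ (Finsupp.single 0 s + Finsupp.single 1 t : Fin 2 →₀ ℕ).support,
      (Finsupp.single 0 s + Finsupp.single 1 t : Fin 2 →₀ ℕ) i
      = (Finsupp.single 0 s + Finsupp.single 1 t : Fin 2 →₀ ℕ).sum (fun _ n => n) := rfl
  rw [this, Finsupp.sum_fintype _ _ (fun _ => rfl), Fin.sum_univ_two]
  simp [Finsupp.single_apply]

lemma coeff_f (C : Finset F) (t₁ t₂ : ℕ) (ht : t₁ + t₂ = C.card + 1) (ht₁ : 1 ≤ t₁) :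
    MvPolynomial.coeff (Finsupp.single 0 t₁ + Finsupp.single 1 t₂)
        ((X 0 - X 1) * ∏ c ∈ C, ((X 0 + X 1 : MvPolynomial (Fin 2) F) - MvPolynomial.C c))
      = (Nat.choose C.card (t₁ - 1) : F) - (Nat.choose C.card t₁ : F) := by
  have hsplit : (X 0 - X 1) * ∏ c ∈ C, ((X 0 + X 1 : MvPolynomial (Fin 2) F) - MvPolynomial.C c)
      = (X 0 - X 1) * (X 0 + X 1) ^ C.card
        + (X 0 - X 1) * (∏ c ∈ C, ((X 0 + X 1 : MvPolynomial (Fin 2) F) - MvPolynomial.C c)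
            - (X 0 + X 1) ^ C.card) := by ring
  rw [hsplit, MvPolynomial.coeff_add, coeff_key _ _ _ ht ht₁]
  have hz : MvPolynomial.coeff (Finsupp.single 0 t₁ + Finsupp.single 1 t₂)
      ((X 0 - X 1) * (∏ c ∈ C, ((X 0 + X 1 : MvPolynomial (Fin 2) F) - MvPolynomial.C c)
          - (X 0 + X 1) ^ C.card)) = 0 := by
    rcases prod_sub_pow C with h0 | hlt
    · rw [h0, mul_zero, MvPolynomial.coeff_zero]
    · apply coeff_eq_zero_of_totalDegree_lt
      rw [fin2_support_sum]
      have h1 : ((X 0 - X 1 : MvPolynomial (Fin 2) F)).totalDegree ≤ 1 :=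
        (totalDegree_sub _ _).trans (by simp [totalDegree_X])
      have h2 := totalDegree_mul (X 0 - X 1 : MvPolynomial (Fin 2) F)
        (∏ c ∈ C, ((X 0 + X 1 : MvPolynomial (Fin 2) F) - MvPolynomial.C c) - (X 0 + X 1) ^ C.card)
      omega
  rw [hz, add_zero]

end CoeffFormula

lemma choose_ne_zero_mod (p k j : ℕ) (hp : p.Prime) (hk : k < p) (hj : j ≤ k) :
    (Nat.choose k j : ZMod p) ≠ 0 := by
  rw [Ne, ZMod.natCast_eq_zero_iff]
  intro hdvd
  have h1 : p ∣ Nat.factorial k := by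
    rw [← Nat.choose_mul_factorial_mul_factorial hj]
    exact (hdvd.mul_right _).mul_right _
  have := (Nat.Prime.dvd_factorial hp).mp h1
  omega

lemma key_coeff_ne_zero (p m n : ℕ) [Fact p.Prime] (hp : p.Prime) (hm : 2 ≤ m) (hn : 2 ≤ n)
    (hmn : m ≠ n) (hmp : m ≤ p) (hnp : n ≤ p) (hsum : m + n ≤ p + 2) :
    (Nat.choose (m + n - 3) (m - 2) : ZMod p) - (Nat.choose (m + n - 3) (m - 1) : ZMod p) ≠ 0 := by
  set k := m + n - 3 with hk
  intro heq
  rw [sub_eq_zero] at heq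
  -- ℕ identity: choose k (m-1) * (m-1) = choose k (m-2) * (n-1)
  have hid : Nat.choose k (m - 1) * (m - 1) = Nat.choose k (m - 2) * (n - 1) := by
    have h := Nat.choose_succ_right_eq k (m - 2)
    rw [show m - 2 + 1 = m - 1 by omega, show k - (m - 2) = n - 1 by omega] at h
    exact h
  have hcast : (Nat.choose k (m - 2) : ZMod p) * ((m - 1 : ℕ) : ZMod p)
      = (Nat.choose k (m - 2) : ZMod p) * ((n - 1 : ℕ) : ZMod p) := by
    calc (Nat.choose k (m - 2) : ZMod p) * ((m - 1 : ℕ) : ZMod p)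
        = (Nat.choose k (m - 1) : ZMod p) * ((m - 1 : ℕ) : ZMod p) := by rw [heq]
      _ = ((Nat.choose k (m - 1) * (m - 1) : ℕ) : ZMod p) := by push_cast; ring
      _ = ((Nat.choose k (m - 2) * (n - 1) : ℕ) : ZMod p) := by rw [hid]
      _ = (Nat.choose k (m - 2) : ZMod p) * ((n - 1 : ℕ) : ZMod p) := by push_cast; ring
  have hchoose : (Nat.choose k (m - 2) : ZMod p) ≠ 0 :=
    choose_ne_zero_mod p k (m - 2) hp (by omega) (by omega)
  have h2 : ((m - 1 : ℕ) : ZMod p) = ((n - 1 : ℕ) : ZMod p) :=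
    mul_left_cancel₀ hchoose hcast
  rw [ZMod.natCast_eq_natCast_iff', Nat.mod_eq_of_lt (by omega), Nat.mod_eq_of_lt (by omega)] at h2
  omega

lemma eh_core {p : ℕ} [Fact p.Prime] (M N : Finset (ZMod p))
    (hM : M.Nonempty) (hN : N.Nonempty) (hmn : M.card ≠ N.card) :
    min p (M.card + N.card - 2) ≤
      (((M ×ˢ N).filter fun x => x.1 ≠ x.2).image fun x => x.1 + x.2).card := by
  have hp : p.Prime := Fact.out
  haveI : NeZero p := ⟨hp.pos.ne'⟩
  have hcardZ : Fintype.card (ZMod p) = p := ZMod.card p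
  have hmp : M.card ≤ p := by
    have h := Finset.card_le_univ M; omega
  have hnp : N.card ≤ p := by
    have h := Finset.card_le_univ N; omega
  set L := ((M ×ˢ N).filter fun x => x.1 ≠ x.2).image fun x => x.1 + x.2 with hLdef
  by_cases hm1 : M.card = 1
  · obtain ⟨a, rfl⟩ := Finset.card_eq_one.mp hm1
    have hsub : (N.erase a).image (a + ·) ⊆ L := by
      intro x hx
      obtain ⟨b, hb, rfl⟩ := Finset.mem_image.mp hx
      obtain ⟨hba, hbN⟩ := Finset.mem_erase.mp hb
      exact Finset.mem_image.mpr ⟨(a, b), Finset.mem_filter.mpr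
        ⟨Finset.mem_product.mpr ⟨Finset.mem_singleton_self a, hbN⟩, fun h => hba (by simpa using h.symm)⟩, rfl⟩
    have hcard : N.card - 1 ≤ ((N.erase a).image (a + ·)).card := by
      rw [Finset.card_image_of_injective _ (add_right_injective a)]
      by_cases haN : a ∈ N
      · rw [Finset.card_erase_of_mem haN]
      · rw [Finset.erase_eq_of_notMem haN]; omega
    calc min p (Finset.card {a} + N.card - 2) ≤ N.card - 1 := by
          rw [Finset.card_singleton]; exact (min_le_right _ _).trans (by omega)
      _ ≤ ((N.erase a).image (a + ·)).card := hcard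
      _ ≤ L.card := Finset.card_le_card hsub
  by_cases hn1 : N.card = 1
  · obtain ⟨b, rfl⟩ := Finset.card_eq_one.mp hn1
    have hsub : (M.erase b).image (· + b) ⊆ L := by
      intro x hx
      obtain ⟨a, ha, rfl⟩ := Finset.mem_image.mp hx
      obtain ⟨hab, haM⟩ := Finset.mem_erase.mp ha
      exact Finset.mem_image.mpr ⟨(a, b), Finset.mem_filter.mpr
        ⟨Finset.mem_product.mpr ⟨haM, Finset.mem_singleton_self b⟩, hab⟩, rfl⟩
    have hcard : M.card - 1 ≤ ((M.erase b).image (· + b)).card := by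
      rw [Finset.card_image_of_injective _ (add_left_injective b)]
      by_cases hbM : b ∈ M
      · rw [Finset.card_erase_of_mem hbM]
      · rw [Finset.erase_eq_of_notMem hbM]; omega
    calc min p (M.card + Finset.card {b} - 2) ≤ M.card - 1 := by
          rw [Finset.card_singleton]; exact (min_le_right _ _).trans (by omega)
      _ ≤ ((M.erase b).image (· + b)).card := hcard
      _ ≤ L.card := Finset.card_le_card hsub
  have hm2 : 2 ≤ M.card := by have := hM.card_pos; omega
  have hn2 : 2 ≤ N.card := by have := hN.card_pos; omega
  by_cases hbig : p + 3 ≤ M.card + N.card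
  · -- L = univ
    have hp3 : 3 ≤ p := by omega
    have h2ne : (2 : ZMod p) ≠ 0 := by
      rw [show (2 : ZMod p) = ((2 : ℕ) : ZMod p) by norm_num, Ne,
        ZMod.natCast_eq_zero_iff]
      intro h
      have := Nat.le_of_dvd (by norm_num) h
      omega
    have huniv : ∀ c : ZMod p, c ∈ L := by
      intro c
      set X := N.image (fun b => c - b) with hXdef
      have hX : X.card = N.card :=
        Finset.card_image_of_injective N (fun x y h => sub_right_inj.mp h)
      have hint : 3 ≤ (M ∩ X).card := by
        have h1 := Finset.card_union_add_card_inter M X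
        have h2 : (M ∪ X).card ≤ p := by
          have h := Finset.card_le_univ (M ∪ X); omega
        omega
      have hex : ∃ a ∈ M ∩ X, a + a ≠ c := by
        by_contra h
        push_neg at h
        have hone : (M ∩ X).card ≤ 1 := Finset.card_le_one.mpr (by
          intro x hx y hy
          have hxc := h x hx
          have hyc := h y hy
          have : (2 : ZMod p) * x = (2 : ZMod p) * y := by
            rw [two_mul, two_mul, hxc, hyc]
          exact mul_left_cancel₀ h2ne this)
        omega
      obtain ⟨a, haMX, hane⟩ := hex
      have haM : a ∈ M := (Finset.mem_inter.mp haMX).1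
      have haX : a ∈ X := (Finset.mem_inter.mp haMX).2
      obtain ⟨b, hbN, hab⟩ := Finset.mem_image.mp haX
      have habc : a + b = c := by rw [← hab]; ring
      have hanb : a ≠ b := fun h => hane (by rw [h] at habc ⊢; exact habc)
      exact Finset.mem_image.mpr ⟨(a, b), Finset.mem_filter.mpr
        ⟨Finset.mem_product.mpr ⟨haM, hbN⟩, hanb⟩, habc⟩
    have : L = Finset.univ := Finset.eq_univ_iff_forall.mpr huniv
    rw [this, Finset.card_univ, hcardZ]
    exact min_le_left _ _
  · -- main case
    push_neg at hbig
    by_contra hcon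
    push_neg at hcon
    have hminle : min p (M.card + N.card - 2) = M.card + N.card - 2 := by
      rw [min_eq_right]; omega
    have hLcard : L.card ≤ M.card + N.card - 3 := by omega
    obtain ⟨C, hLC, hCcard⟩ := Finset.exists_superset_card_eq hLcard
      (by rw [hcardZ]; omega)
    set f := ((X 0 - X 1) * ∏ c ∈ C, (X 0 + X 1 - MvPolynomial.C c) :
      MvPolynomial (Fin 2) (ZMod p)) with hfdef
    have hdeg : f.totalDegree ≤ M.card - 1 + (N.card - 1) := by
      have h1 := totalDegree_mul (X 0 - X 1 : MvPolynomial (Fin 2) (ZMod p))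
        (∏ c ∈ C, (X 0 + X 1 - MvPolynomial.C c))
      have h2 : ((X 0 - X 1 : MvPolynomial (Fin 2) (ZMod p))).totalDegree ≤ 1 :=
        (totalDegree_sub _ _).trans (by simp [totalDegree_X])
      have h3 := prod_totalDegree C
      rw [hfdef]
      omega
    have hzero : ∀ a ∈ M, ∀ b ∈ N, MvPolynomial.eval ![a, b] f = 0 := by
      intro a haM b hbN
      rw [hfdef, map_mul, map_sub, MvPolynomial.eval_X, MvPolynomial.eval_X]
      simp only [Matrix.cons_val_zero, Matrix.cons_val_one, Matrix.head_cons]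
      by_cases hab : a = b
      · rw [hab, sub_self, zero_mul]
      · have habL : a + b ∈ L := Finset.mem_image.mpr ⟨(a, b), Finset.mem_filter.mpr
          ⟨Finset.mem_product.mpr ⟨haM, hbN⟩, hab⟩, rfl⟩
        have habC : a + b ∈ C := hLC habL
        rw [map_prod]
        rw [Finset.prod_eq_zero habC]
        · ring
        · rw [map_sub, map_add, MvPolynomial.eval_X, MvPolynomial.eval_X, MvPolynomial.eval_C]
          simp only [Matrix.cons_val_zero, Matrix.cons_val_one, Matrix.head_cons]
          ring
    have h0 : MvPolynomial.coeff
        (Finsupp.single 0 (M.card - 1) + Finsupp.single 1 (N.card - 1)) f = 0 := by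
      rw [← coeff_formula M N hM hN f hdeg]
      refine Finset.sum_eq_zero fun a haM => Finset.sum_eq_zero fun b hbN => ?_
      rw [hzero a haM b hbN, mul_zero]
    have hcoef := coeff_f C (M.card - 1) (N.card - 1) (by omega) (by omega)
    rw [hfdef] at h0
    rw [h0] at hcoef
    have hne := key_coeff_ne_zero p M.card N.card hp hm2 hn2 hmn hmp hnp (by omega)
    rw [hCcard, show M.card - 1 - 1 = M.card - 2 by omega] at hcoef
    exact hne hcoef.symm

theorem erdos_heilbronn
    (p : ℕ) (hp : p.Prime) (M N : Finset (ZMod p))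
    (hM : M.Nonempty) (hN : N.Nonempty) :
    min p (M.card + N.card - 3) ≤
      (((M ×ˢ N).filter fun x => x.1 ≠ x.2).image fun x => x.1 + x.2).card := by
  haveI : Fact p.Prime := ⟨hp⟩
  by_cases hmn : M.card = N.card
  · by_cases hm1 : M.card = 1
    · have h0 : M.card + N.card - 3 = 0 := by omega
      rw [h0]
      simp
    · have hm2 : 2 ≤ M.card := by have := hM.card_pos; omega
      obtain ⟨a, ha⟩ := hM
      have hsub : (((M.erase a ×ˢ N).filter fun x => x.1 ≠ x.2).image fun x => x.1 + x.2)
          ⊆ ((M ×ˢ N).filter fun x => x.1 ≠ x.2).image fun x => x.1 + x.2 :=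
        Finset.image_subset_image (Finset.filter_subset_filter _
          (Finset.product_subset_product (Finset.erase_subset _ _) Finset.Subset.rfl))
      have hne : (M.erase a).Nonempty := by
        rw [← Finset.card_pos, Finset.card_erase_of_mem ha]
        omega
      have hcard : (M.erase a).card ≠ N.card := by
        rw [Finset.card_erase_of_mem ha]
        omega
      have h := eh_core (M.erase a) N hne hN hcard
      rw [Finset.card_erase_of_mem ha] at h
      calc min p (M.card + N.card - 3) = min p (M.card - 1 + N.card - 2) := by
            congr 1; omega
        _ ≤ _ := h
        _ ≤ _ := Finset.card_le_card hsub
  · have h := eh_core M N hM hN hmn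
    exact le_trans (min_le_min le_rfl (by omega)) h
end
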